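/- arXiv:1209.3443 — 6 statements merged into one kernel-verified Lean document; each statement's English description precedes it below -/
import Mathlib

section
/- Every countable-dimensional metric space (a countable union of zero-dimensional subspaces) is a C-space. -/
open Set TopologicalSpace FirstOrder

universe u

/-- `U` is a cover of `X` by open sets. -/
def IsOpenCover {X : Type u} [TopologicalSpace X] (U : Set (Set X)) : Prop :=
  (∀ s ∈ U, IsOpen s) ∧ ⋃₀ U = Set.univ

/-- `V` refines `U`: every member of `V` is contained in some member of `U`. -/
def Refines {X : Type u} (V U : Set (Set X)) : Prop :=
  ∀ v ∈ V, ∃ u ∈ U, v ⊆ u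

/-- `X` is a C-space (has property C): every sequence of open covers admits a sequence of
families of pairwise disjoint open sets, the `i`-th refining the `i`-th cover, whose union
covers `X`. -/
def IsCSpace (X : Type u) [TopologicalSpace X] : Prop :=
  ∀ U : ℕ → Set (Set X), (∀ i, IsOpenCover (U i)) →
    ∃ V : ℕ → Set (Set X),
      (∀ i, (∀ s ∈ V i, IsOpen s) ∧ (V i).PairwiseDisjoint id ∧ Refines (V i) (U i)) ∧
      (⋃ i, ⋃₀ (V i)) = Set.univ

/-- `X` is an `m`-C-space: property C restricted to `m`-element open covers. -/
def IsMCSpace (m : ℕ) (X : Type u) [TopologicalSpace X] : Prop :=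
  ∀ U : ℕ → Fin m → Set X, (∀ i j, IsOpen (U i j)) → (∀ i, (⋃ j, U i j) = Set.univ) →
    ∃ V : ℕ → Set (Set X),
      (∀ i, (∀ s ∈ V i, IsOpen s) ∧ (V i).PairwiseDisjoint id ∧ ∀ v ∈ V i, ∃ j, v ⊆ U i j) ∧
      (⋃ i, ⋃₀ (V i)) = Set.univ

/-- Covering dimension at most `n`: every finite open cover has a finite open refinement
of order at most `n + 1`. -/
def CovDimLE (X : Type u) [TopologicalSpace X] (n : ℕ) : Prop :=
  ∀ U : Set (Set X), U.Finite → IsOpenCover U →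
    ∃ V : Set (Set X), V.Finite ∧ IsOpenCover V ∧ Refines V U ∧
      ∀ x : X, {v ∈ V | x ∈ v}.ncard ≤ n + 1

/-- The covering dimension, as an extended natural number (`⊤` if infinite dimensional). -/
noncomputable def covDim (X : Type u) [TopologicalSpace X] : ℕ∞ :=
  sInf ((fun n : ℕ => (n : ℕ∞)) '' {n : ℕ | CovDimLE X n})

/-!
A zero-dimensional metric space is paracompact and normal, and in it every closed set is
separated from each open superset by a clopen set. Hence every open cover has a locally finite
clopen refinement, which becomes disjoint once the index set is well ordered and each member loses
the earlier ones (their union is closed by local finiteness). Disjoint relatively open subsets of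
`Y n` extend to disjoint open subsets of `X`, so the `n`-th cover of `X` has a disjoint open
refinement covering `Y n`, and these refinements witness property C.
-/

open Function Metric

theorem Set.Finite.pairwiseDisjoint_of_ncard_le_one {Z : Type*} {V : Set (Set Z)} (hV : V.Finite)
    (hord : ∀ x, {v ∈ V | x ∈ v}.ncard ≤ 1) : V.PairwiseDisjoint id := by
  intro v hv w hw hvw
  refine disjoint_left.mpr fun x hxv hxw => hvw ?_
  exact (ncard_le_one (hV.subset (sep_subset _ _))).mp (hord x) v ⟨hv, hxv⟩ w ⟨hw, hxw⟩

section ZeroDimensional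

variable {Z : Type*} [TopologicalSpace Z]

theorem Set.PairwiseDisjoint.isClopen_sUnion_of_subset {V S : Set (Set Z)}
    (hdisj : V.PairwiseDisjoint id) (hopen : ∀ v ∈ V, IsOpen v) (hcov : ⋃₀ V = univ)
    (hS : S ⊆ V) : IsClopen (⋃₀ S) := by
  refine ⟨?_, isOpen_sUnion fun v hv => hopen v (hS hv)⟩
  have hcompl : (⋃₀ S)ᶜ = ⋃₀ (V \ S) := by
    ext x
    obtain ⟨v, hv, hxv⟩ : x ∈ ⋃₀ V := hcov ▸ mem_univ x
    constructor
    · exact fun hx => ⟨v, ⟨hv, fun hvS => hx ⟨v, hvS, hxv⟩⟩, hxv⟩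
    · rintro ⟨w, ⟨hwV, hwS⟩, hxw⟩ ⟨t, htS, hxt⟩
      have hwt : w ≠ t := by rintro rfl; exact hwS htS
      exact disjoint_left.mp (hdisj hwV (hS htS) hwt) hxw hxt
  rw [← isOpen_compl_iff, hcompl]
  exact isOpen_sUnion fun v hv => hopen v hv.1

/-- Refine the two-set cover `{W, Aᶜ}` by a disjoint finite open cover and take the members
meeting `A`. -/
theorem CovDimLE.exists_isClopen_between (h : CovDimLE Z 0) {A W : Set Z} (hA : IsClosed A)
    (hW : IsOpen W) (hAW : A ⊆ W) : ∃ C : Set Z, IsClopen C ∧ A ⊆ C ∧ C ⊆ W := by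
  have hcover : IsOpenCover ({W, Aᶜ} : Set (Set Z)) := by
    refine ⟨by rintro s (rfl | rfl); exacts [hW, hA.isOpen_compl], ?_⟩
    rw [sUnion_pair]
    exact eq_univ_of_forall fun x => (em (x ∈ A)).imp (fun hx => hAW hx) id
  obtain ⟨V, hVfin, ⟨hVopen, hVcov⟩, hVref, hVord⟩ := h _ (toFinite _) hcover
  refine ⟨⋃₀ {v ∈ V | (v ∩ A).Nonempty},
    (hVfin.pairwiseDisjoint_of_ncard_le_one hVord).isClopen_sUnion_of_subset hVopen hVcov
      (sep_subset _ _), ?_, ?_⟩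
  · intro x hx
    obtain ⟨v, hv, hxv⟩ : x ∈ ⋃₀ V := hVcov ▸ mem_univ x
    exact ⟨v, ⟨hv, x, hxv, hx⟩, hxv⟩
  · rintro x ⟨v, ⟨hv, y, hyv, hyA⟩, hxv⟩
    obtain ⟨s, rfl | rfl, hvs⟩ := hVref v hv
    · exact hvs hxv
    · exact absurd (hvs hyv) (not_not.mpr hyA)

theorem LocallyFinite.exists_disjoint_isOpen_subset_of_isClopen {ι : Type*} {C : ι → Set Z}
    (hfin : LocallyFinite C) (hclopen : ∀ i, IsClopen (C i)) (hcov : ⋃ i, C i = univ) :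
    ∃ D : ι → Set Z, (∀ i, IsOpen (D i)) ∧ Pairwise (Disjoint on D) ∧ (∀ i, D i ⊆ C i) ∧
      ⋃ i, D i = univ := by
  let r : ι → ι → Prop := WellOrderingRel
  have hwf : WellFounded r := IsWellFounded.wf
  set D : ι → Set Z := fun i => C i \ ⋃ j : {j // r j i}, C j
  have hDC : ∀ i j, r j i → Disjoint (D i) (C j) :=
    fun i j hji => disjoint_left.mpr fun x hx hxj => hx.2 (mem_iUnion.mpr ⟨⟨j, hji⟩, hxj⟩)
  refine ⟨D, fun i => (hclopen i).2.sdiff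
    ((hfin.comp_injective Subtype.val_injective).isClosed_iUnion fun j => (hclopen j).1),
    ?_, fun i => sdiff_subset, ?_⟩
  · intro i j hij
    rcases trichotomous_of r i j with h | h | h
    · exact ((hDC j i h).mono_right sdiff_subset).symm
    · exact absurd h hij
    · exact (hDC i j h).mono_right sdiff_subset
  · refine eq_univ_of_forall fun x => ?_
    have hne : {i | x ∈ C i}.Nonempty := mem_iUnion.mp (hcov ▸ mem_univ x)
    refine mem_iUnion.mpr ⟨hwf.min _ hne, hwf.min_mem _ hne, fun hx => ?_⟩
    obtain ⟨⟨j, hj⟩, hxj⟩ := mem_iUnion.mp hx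
    exact hwf.not_lt_min _ hxj hj

variable [ParacompactSpace Z] [NormalSpace Z]

theorem CovDimLE.exists_locallyFinite_clopen_refinement (h : CovDimLE Z 0) {ι : Type*}
    {u : ι → Set Z} (hopen : ∀ i, IsOpen (u i)) (hcov : ⋃ i, u i = univ) :
    ∃ C : ι → Set Z, LocallyFinite C ∧ (∀ i, IsClopen (C i)) ∧ (∀ i, C i ⊆ u i) ∧
      ⋃ i, C i = univ := by
  obtain ⟨v, hvopen, hvcov, hvfin, hvu⟩ := precise_refinement u hopen hcov
  obtain ⟨F, hFcov, hFclosed, hFv⟩ :=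
    exists_iUnion_eq_closed_subset hvopen hvfin.point_finite hvcov
  choose C hCclopen hFC hCv using fun i =>
    h.exists_isClopen_between (hFclosed i) (hvopen i) (hFv i)
  exact ⟨C, hvfin.subset hCv, hCclopen, fun i => (hCv i).trans (hvu i),
    univ_subset_iff.mp (hFcov ▸ iUnion_mono hFC)⟩

theorem CovDimLE.exists_disjoint_open_refinement (h : CovDimLE Z 0) {ι : Type*}
    {u : ι → Set Z} (hopen : ∀ i, IsOpen (u i)) (hcov : ⋃ i, u i = univ) :
    ∃ D : ι → Set Z, (∀ i, IsOpen (D i)) ∧ Pairwise (Disjoint on D) ∧ (∀ i, D i ⊆ u i) ∧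
      ⋃ i, D i = univ := by
  obtain ⟨C, hCfin, hCclopen, hCu, hCcov⟩ := h.exists_locallyFinite_clopen_refinement hopen hcov
  obtain ⟨D, hDopen, hDdisj, hDC, hDcov⟩ :=
    hCfin.exists_disjoint_isOpen_subset_of_isClopen hCclopen hCcov
  exact ⟨D, hDopen, hDdisj, fun i => (hDC i).trans (hCu i), hDcov⟩

end ZeroDimensional

/-- Each `g i` extends to the set of points closer to `g i` than to the rest of `Y`. -/
theorem exists_disjoint_isOpen_extension {X : Type*} [PseudoEMetricSpace X] {Y : Set X}
    {ι : Type*} {g : ι → Set Y} (hopen : ∀ i, IsOpen (g i)) (hdisj : Pairwise (Disjoint on g)) :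
    ∃ o : ι → Set X, (∀ i, IsOpen (o i)) ∧ Pairwise (Disjoint on o) ∧
      ∀ i, Subtype.val ⁻¹' o i = g i := by
  set A : ι → Set X := fun i => Subtype.val '' g i
  set B : ι → Set X := fun i => Y \ A i
  have hAB : ∀ i j, i ≠ j → A j ⊆ B i := by
    rintro i j hij _ ⟨y, hy, rfl⟩
    refine ⟨y.2, ?_⟩
    rintro ⟨y', hy', hyy'⟩
    rw [Subtype.val_injective hyy'] at hy'
    exact disjoint_left.mp (hdisj hij) hy' hy
  refine ⟨fun i => {x | infEDist x (A i) < infEDist x (B i)},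
    fun i => isOpen_lt continuous_infEDist continuous_infEDist, ?_, ?_⟩
  · intro i j hij
    refine disjoint_left.mpr fun x (hi : infEDist x (A i) < infEDist x (B i))
      (hj : infEDist x (A j) < infEDist x (B j)) =>
        lt_asymm (hi.trans_le (infEDist_anti (hAB i j hij)))
          (hj.trans_le (infEDist_anti (hAB j i hij.symm)))
  · intro i
    ext y
    change infEDist y.1 (A i) < infEDist y.1 (B i) ↔ y ∈ g i
    by_cases hy : y ∈ g i
    · obtain ⟨O, hO, hOg⟩ := isOpen_induced_iff.mp (hopen i)
      have hyO : y.1 ∈ O := by rw [← mem_preimage, hOg]; exact hy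
      have hOB : Disjoint O (B i) := disjoint_left.mpr fun x hxO hxB =>
        hxB.2 ⟨⟨x, hxB.1⟩, by rw [← hOg]; exact hxO, rfl⟩
      rw [infEDist_zero_of_mem (mem_image_of_mem _ hy), infEDist_pos_iff_notMem_closure]
      exact iff_of_true (disjoint_left.mp (hOB.closure_right hO) hyO) hy
    · have hyB : y.1 ∈ B i := ⟨y.2, fun ⟨z, hz, hzy⟩ => hy (Subtype.val_injective hzy ▸ hz)⟩
      rw [infEDist_zero_of_mem hyB]
      exact iff_of_false not_lt_zero hy

theorem CovDimLE.exists_disjoint_open_refinement_covering_subset {X : Type u} [MetricSpace X]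
    {Y : Set X} (hY : CovDimLE Y 0) {U : Set (Set X)} (hU : IsOpenCover U) :
    ∃ V : Set (Set X), (∀ s ∈ V, IsOpen s) ∧ V.PairwiseDisjoint id ∧ Refines V U ∧
      Y ⊆ ⋃₀ V := by
  have htrace_cov : ⋃ s : U, Subtype.val ⁻¹' (s : Set X) = (univ : Set Y) := by
    rw [← preimage_iUnion, ← sUnion_eq_iUnion, hU.2, preimage_univ]
  obtain ⟨D, hDopen, hDdisj, hDU, hDcov⟩ := hY.exists_disjoint_open_refinement
    (fun s : U => (hU.1 s s.2).preimage continuous_subtype_val) htrace_cov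
  obtain ⟨o, hoopen, hodisj, hoD⟩ := exists_disjoint_isOpen_extension hDopen hDdisj
  refine ⟨range fun s : U => o s ∩ s, ?_, ?_, ?_, ?_⟩
  · rintro _ ⟨s, rfl⟩
    exact (hoopen s).inter (hU.1 s s.2)
  · exact Pairwise.range_pairwise fun s t hst =>
      (hodisj hst).mono inter_subset_left inter_subset_left
  · rintro _ ⟨s, rfl⟩
    exact ⟨s, s.2, inter_subset_right⟩
  · intro y hy
    obtain ⟨s, hs⟩ := mem_iUnion.mp (hDcov ▸ mem_univ (⟨y, hy⟩ : Y))
    refine ⟨o s ∩ s, mem_range_self s, ?_, hDU s hs⟩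
    rw [← mem_preimage (f := Subtype.val) (a := (⟨y, hy⟩ : Y)), hoD]
    exact hs

/-- Every countable-dimensional metric space (a countable union of
zero-dimensional subspaces) is a C-space. -/
theorem countableDimensional_metric_isCSpace (X : Type u) [MetricSpace X]
    (Y : ℕ → Set X) (hcover : (⋃ n, Y n) = Set.univ)
    (hzero : ∀ n, CovDimLE (↥(Y n)) 0) : IsCSpace X := by
  intro U hU
  choose V hVopen hVdisj hVref hVcov using fun n =>
    (hzero n).exists_disjoint_open_refinement_covering_subset (hU n)
  refine ⟨V, fun n => ⟨hVopen n, hVdisj n, hVref n⟩, ?_⟩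
  exact univ_subset_iff.mp (hcover ▸ iUnion_mono hVcov)
end

section
/- A compact Hausdorff space X is a C-space if and only if for every sequence (U_i) of finite open covers of X there exist finitely many families V_1, ..., V_m of pairwise disjoint open sets with V_i refining U_i and V_1 ∪ ... ∪ V_m covering X. -/
/-! Both directions are compactness. If the disjoint open families `V i` refine the covers and
together cover `X`, the open sets `⋃₀ V i` cover `X`, so finitely many of them already do.
Conversely, each open cover can be shrunk to a finite subcover, and a finite sequence of disjoint
refinements of these subcovers becomes an infinite one by appending empty families. -/

open Set TopologicalSpace FirstOrder

universe u

section

variable {X : Type u} [TopologicalSpace X]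

def IsDisjointOpenRefinement (V U : Set (Set X)) : Prop :=
  (∀ s ∈ V, IsOpen s) ∧ V.PairwiseDisjoint id ∧ Refines V U

theorem isDisjointOpenRefinement_empty (U : Set (Set X)) : IsDisjointOpenRefinement ∅ U :=
  ⟨fun _ h => h.elim, pairwiseDisjoint_empty, fun _ h => h.elim⟩

theorem IsDisjointOpenRefinement.mono {V T U : Set (Set X)} (h : IsDisjointOpenRefinement V T)
    (hTU : T ⊆ U) : IsDisjointOpenRefinement V U :=
  ⟨h.1, h.2.1, fun v hv => (h.2.2 v hv).imp fun _ ⟨ht, hvt⟩ => ⟨hTU ht, hvt⟩⟩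

theorem IsOpenCover.exists_finite_subcover [CompactSpace X] {U : Set (Set X)}
    (hU : IsOpenCover U) : ∃ T ⊆ U, T.Finite ∧ IsOpenCover T := by
  obtain ⟨T, hTU, hTf, hT⟩ :=
    isCompact_univ.elim_finite_subcover_image hU.1 (by rw [← sUnion_eq_biUnion, hU.2])
  exact ⟨T, hTU, hTf, fun s hs => hU.1 s (hTU hs), univ_subset_iff.1 (sUnion_eq_biUnion ▸ hT)⟩

theorem IsCompact.exists_subset_iUnion_fin {s : Set X} (hs : IsCompact s) {W : ℕ → Set X}
    (hW : ∀ i, IsOpen (W i)) (hsW : s ⊆ ⋃ i, W i) : ∃ m, s ⊆ ⋃ i : Fin m, W i := by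
  obtain ⟨t, hst⟩ := hs.elim_finite_subcover W hW hsW
  obtain ⟨m, htm⟩ := t.exists_nat_subset_range
  refine ⟨m, hst.trans <| iUnion₂_subset fun i hi => ?_⟩
  exact subset_iUnion_of_subset ⟨i, Finset.mem_range.1 (htm hi)⟩ subset_rfl

end

theorem compact_isCSpace_iff_finite_general (X : Type u) [TopologicalSpace X] [CompactSpace X] :
    IsCSpace X ↔
      ∀ U : ℕ → Set (Set X), (∀ i, (U i).Finite ∧ IsOpenCover (U i)) →
        ∃ m : ℕ, ∃ V : Fin m → Set (Set X),
          (∀ i : Fin m, (∀ s ∈ V i, IsOpen s) ∧ (V i).PairwiseDisjoint id ∧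
            Refines (V i) (U i.val)) ∧
          (⋃ i : Fin m, ⋃₀ (V i)) = Set.univ := by
  constructor
  · intro hC U hU
    obtain ⟨V, hV, hcov⟩ := hC U fun i => (hU i).2
    obtain ⟨m, hm⟩ := isCompact_univ.exists_subset_iUnion_fin
      (fun i => isOpen_sUnion (hV i).1) hcov.ge
    exact ⟨m, fun i => V i, fun i => hV i, univ_subset_iff.1 hm⟩
  · intro hfin U hU
    choose T hTU hT using fun i => (hU i).exists_finite_subcover
    obtain ⟨m, V, hV, hcov⟩ := hfin T hT
    refine ⟨Function.extend Fin.val V ⊥, fun i => ?_, ?_⟩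
    · show IsDisjointOpenRefinement _ _
      rcases em (∃ j : Fin m, j.val = i) with ⟨j, rfl⟩ | hi
      · rw [Fin.val_injective.extend_apply]
        exact IsDisjointOpenRefinement.mono (hV j) (hTU j)
      · rw [Function.extend_apply' _ _ _ hi]
        exact isDisjointOpenRefinement_empty _
    · rw [← sUnion_iUnion, ← iSup_eq_iUnion, iSup_extend_bot Fin.val_injective, iSup_eq_iUnion,
        sUnion_iUnion, hcov]

/-- A compact Hausdorff space is a C-space iff for every sequence of finite
open covers there are finitely many disjoint open families, the `i`-th refining the `i`-th
cover, whose union covers. -/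
theorem compact_isCSpace_iff_finite (X : Type u) [TopologicalSpace X] [CompactSpace X]
    [T2Space X] :
    IsCSpace X ↔
      ∀ U : ℕ → Set (Set X), (∀ i, (U i).Finite ∧ IsOpenCover (U i)) →
        ∃ m : ℕ, ∃ V : Fin m → Set (Set X),
          (∀ i : Fin m, (∀ s ∈ V i, IsOpen s) ∧ (V i).PairwiseDisjoint id ∧
            Refines (V i) (U i.val)) ∧
          (⋃ i : Fin m, ⋃₀ (V i)) = Set.univ :=
  compact_isCSpace_iff_finite_general X
end

section
/- Let X be a compact Hausdorff space and F a base for closed sets of X that is closed under finite unions and finite intersections (so F is a bounded distributive lattice under union and intersection). Then the map h : X → wF, h(x) = {F ∈ F : x ∈ F}, is a well-defined homeomorphism onto the Wallman space wF of lattice ultrafilters on F. -/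
open Set TopologicalSpace FirstOrder

universe u v

/-- An ultrafilter on a lattice `F` of subsets of `α` (in the Wallman sense): a proper filter
on `F` such that every member of `F` meeting all members of the filter belongs to it. -/
structure LUltra {α : Type u} (F : Set (Set α)) where
  sets : Set (Set α)
  sets_subset : sets ⊆ F
  univ_mem : Set.univ ∈ sets
  empty_notMem : ∅ ∉ sets
  inter_mem : ∀ a ∈ sets, ∀ b ∈ sets, a ∩ b ∈ sets
  superset_mem : ∀ a ∈ sets, ∀ b ∈ F, a ⊆ b → b ∈ sets
  ultra : ∀ a ∈ F, a ∉ sets → ∃ b ∈ sets, a ∩ b = ∅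

/-- The Wallman topology: the sets `â = {u : a ∈ u}`, `a ∈ F`, form a base for closed sets. -/
instance LUltra.instTopologicalSpace {α : Type u} (F : Set (Set α)) :
    TopologicalSpace (LUltra F) :=
  TopologicalSpace.generateFrom {s | ∃ a ∈ F, s = {u : LUltra F | a ∈ u.sets}ᶜ}

/-! The point `x` goes to the ultrafilter `{s ∈ F | x ∈ s}`. That this is an ultrafilter, and
that distinct points give distinct ones, is the fact that `F` separates points from closed sets:
the members of `F` through `x` form a downward directed family of closed sets with intersection
`{x}`, so by compactness one of them misses a given closed set avoiding `x`. Every ultrafilter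
arises this way, since its members form a directed family of nonempty closed sets and so share a
point, which determines the ultrafilter. The map pulls `â` back to `a`, so it is continuous, and
being bijective it sends `⋂₀ S` to `⋂ s ∈ S, ŝ`, so it is closed. -/

namespace LUltra

variable {α : Type u} {F : Set (Set α)}

theorem ext_sets {u v : LUltra F} (h : u.sets = v.sets) : u = v := by
  cases u; cases v; cases h; rfl

theorem isClosed_setOf_mem {a : Set α} (ha : a ∈ F) : IsClosed {u : LUltra F | a ∈ u.sets} :=
  isOpen_compl_iff.mp (GenerateOpen.basic _ ⟨a, ha, rfl⟩)

theorem directedOn_sets (u : LUltra F) : DirectedOn (· ⊇ ·) u.sets :=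
  fun a ha b hb => ⟨a ∩ b, u.inter_mem a ha b hb, inter_subset_left, inter_subset_right⟩

def principal (huniv : univ ∈ F) (hinter : ∀ a ∈ F, ∀ b ∈ F, a ∩ b ∈ F)
    (hsep : ∀ a ∈ F, ∀ x ∉ a, ∃ b ∈ F, x ∈ b ∧ Disjoint a b) (x : α) : LUltra F where
  sets := {s ∈ F | x ∈ s}
  sets_subset _ hs := hs.1
  univ_mem := ⟨huniv, mem_univ x⟩
  empty_notMem h := h.2
  inter_mem a ha b hb := ⟨hinter a ha.1 b hb.1, ha.2, hb.2⟩
  superset_mem _ ha b hb hab := ⟨hb, hab ha.2⟩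
  ultra a ha hxa := by
    obtain ⟨b, hb, hxb, hab⟩ := hsep a ha x fun h => hxa ⟨ha, h⟩
    exact ⟨b, ⟨hb, hxb⟩, disjoint_iff_inter_eq_empty.mp hab⟩

variable {huniv : univ ∈ F} {hinter : ∀ a ∈ F, ∀ b ∈ F, a ∩ b ∈ F}
  {hsep : ∀ a ∈ F, ∀ x ∉ a, ∃ b ∈ F, x ∈ b ∧ Disjoint a b}

theorem principal_eq_of_mem_sInter {u : LUltra F} {x : α} (hx : x ∈ ⋂₀ u.sets) :
    principal huniv hinter hsep x = u := by
  refine ext_sets (Set.ext fun s => ⟨fun ⟨hs, hxs⟩ => ?_, fun hs => ⟨u.sets_subset hs, hx s hs⟩⟩)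
  by_contra hsu
  obtain ⟨b, hb, hsb⟩ := u.ultra s hs hsu
  exact (hsb ▸ mem_inter hxs (hx b hb) : x ∈ (∅ : Set α))

theorem preimage_principal_setOf_mem {a : Set α} (ha : a ∈ F) :
    principal huniv hinter hsep ⁻¹' {u | a ∈ u.sets} = a :=
  Set.ext fun _ => and_iff_right ha

end LUltra

theorem exists_mem_closedBase_disjoint {X : Type u} [TopologicalSpace X] [CompactSpace X]
    [T1Space X] {F : Set (Set X)} (hclosed : ∀ s ∈ F, IsClosed s)
    (hbase : ∀ C : Set X, IsClosed C → ∃ S ⊆ F, C = ⋂₀ S) (huniv : univ ∈ F)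
    (hinter : ∀ a ∈ F, ∀ b ∈ F, a ∩ b ∈ F) {C : Set X} (hC : IsClosed C) {x : X}
    (hx : x ∉ C) : ∃ b ∈ F, x ∈ b ∧ Disjoint C b := by
  set D := {b ∈ F | x ∈ b}
  have hD : ⋂₀ D ⊆ {x} := by
    obtain ⟨S, hSF, hS⟩ := hbase {x} isClosed_singleton
    rw [hS]
    exact sInter_subset_sInter fun s hs => ⟨hSF hs, hS.subset rfl s hs⟩
  by_contra! hmeet
  have : Nonempty D := ⟨⟨univ, huniv, mem_univ x⟩⟩
  obtain ⟨y, hy⟩ := IsCompact.nonempty_iInter_of_directed_nonempty_isCompact_isClosed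
    (fun b : D => C ∩ b)
    (fun b c => ⟨⟨b ∩ c, hinter b b.2.1 c c.2.1, b.2.2, c.2.2⟩,
      inter_subset_inter_right C inter_subset_left, inter_subset_inter_right C inter_subset_right⟩)
    (fun b => not_disjoint_iff_nonempty_inter.mp (hmeet b b.2.1 b.2.2))
    (fun b => (hC.inter (hclosed b b.2.1)).isCompact)
    (fun b => hC.inter (hclosed b b.2.1))
  have hyx : y = x := hD fun b hb => (mem_iInter.mp hy ⟨b, hb⟩).2
  exact hx (hyx ▸ (mem_iInter.mp hy ⟨univ, huniv, mem_univ x⟩).1)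

namespace LUltra

variable {X : Type u} [TopologicalSpace X] {F : Set (Set X)} {huniv : univ ∈ F}
  {hinter : ∀ a ∈ F, ∀ b ∈ F, a ∩ b ∈ F} {hsep : ∀ a ∈ F, ∀ x ∉ a, ∃ b ∈ F, x ∈ b ∧ Disjoint a b}

theorem sInter_sets_nonempty [CompactSpace X] (hclosed : ∀ s ∈ F, IsClosed s) (u : LUltra F) :
    (⋂₀ u.sets).Nonempty :=
  have : Nonempty u.sets := ⟨⟨univ, u.univ_mem⟩⟩
  IsCompact.nonempty_sInter_of_directed_nonempty_isCompact_isClosed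
    u.directedOn_sets
    (fun _ hs => nonempty_iff_ne_empty.mpr fun h => u.empty_notMem (h ▸ hs))
    (fun s hs => (hclosed s (u.sets_subset hs)).isCompact) (fun s hs => hclosed s (u.sets_subset hs))

theorem principal_surjective [CompactSpace X] (hclosed : ∀ s ∈ F, IsClosed s) :
    Function.Surjective (principal huniv hinter hsep) := fun u =>
  let ⟨_, hx⟩ := sInter_sets_nonempty hclosed u
  ⟨_, principal_eq_of_mem_sInter hx⟩

theorem principal_injective [CompactSpace X] [T1Space X] (hclosed : ∀ s ∈ F, IsClosed s)
    (hbase : ∀ C : Set X, IsClosed C → ∃ S ⊆ F, C = ⋂₀ S) :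
    Function.Injective (principal huniv hinter hsep) := by
  intro x y hxy
  by_contra hne
  obtain ⟨b, hb, hyb, hxb⟩ :=
    exists_mem_closedBase_disjoint hclosed hbase huniv hinter isClosed_singleton (Ne.symm hne)
  have hxb' : b ∈ (principal huniv hinter hsep x).sets := hxy ▸ ⟨hb, hyb⟩
  exact disjoint_singleton_left.mp hxb hxb'.2

theorem continuous_principal (hclosed : ∀ s ∈ F, IsClosed s) :
    Continuous (principal huniv hinter hsep) := by
  refine continuous_generateFrom_iff.mpr ?_
  rintro _ ⟨a, ha, rfl⟩
  rw [preimage_compl, preimage_principal_setOf_mem ha]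
  exact (hclosed a ha).isOpen_compl

theorem isClosedMap_principal (hbase : ∀ C : Set X, IsClosed C → ∃ S ⊆ F, C = ⋂₀ S)
    (hbij : Function.Bijective (principal huniv hinter hsep)) :
    IsClosedMap (principal huniv hinter hsep) := by
  intro C hC
  obtain ⟨S, hSF, rfl⟩ := hbase C hC
  rw [sInter_eq_biInter, image_iInter₂ hbij]
  refine isClosed_biInter fun s hs => ?_
  rw [← preimage_principal_setOf_mem (huniv := huniv) (hinter := hinter) (hsep := hsep) (hSF hs),
    image_preimage_eq _ hbij.surjective]
  exact isClosed_setOf_mem (hSF hs)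

end LUltra


theorem wallman_of_closed_base_general (X : Type u) [TopologicalSpace X] [CompactSpace X]
    [T2Space X] (F : Set (Set X))
    (hclosed : ∀ s ∈ F, IsClosed s)
    (hbase : ∀ C : Set X, IsClosed C → ∃ S ⊆ F, C = ⋂₀ S)
    (huniv : Set.univ ∈ F)
    (hinter : ∀ a ∈ F, ∀ b ∈ F, a ∩ b ∈ F) :
    ∃ h : X ≃ₜ LUltra F, ∀ x : X, (h x).sets = {s ∈ F | x ∈ s} := by
  have hsep : ∀ a ∈ F, ∀ x ∉ a, ∃ b ∈ F, x ∈ b ∧ Disjoint a b := fun a ha _ hx =>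
    exists_mem_closedBase_disjoint hclosed hbase huniv hinter (hclosed a ha) hx
  have hbij : Function.Bijective (LUltra.principal huniv hinter hsep) :=
    ⟨LUltra.principal_injective hclosed hbase, LUltra.principal_surjective hclosed⟩
  have hcont : Continuous (LUltra.principal huniv hinter hsep) :=
    LUltra.continuous_principal hclosed
  exact ⟨(Equiv.ofBijective _ hbij).toHomeomorphOfContinuousClosed hcont
    (LUltra.isClosedMap_principal hbase hbij), fun _ => rfl⟩

/-- If `F` is a base for the closed sets of a compact Hausdorff space `X`
closed under finite unions and intersections (a bounded lattice of closed sets), then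
`h : x ↦ {F ∈ F : x ∈ F}` is a homeomorphism of `X` onto the Wallman space `wF`. -/
theorem wallman_of_closed_base (X : Type u) [TopologicalSpace X] [CompactSpace X]
    [T2Space X] (F : Set (Set X))
    (hclosed : ∀ s ∈ F, IsClosed s)
    (hbase : ∀ C : Set X, IsClosed C → ∃ S ⊆ F, C = ⋂₀ S)
    (hempty : ∅ ∈ F) (huniv : Set.univ ∈ F)
    (hunion : ∀ a ∈ F, ∀ b ∈ F, a ∪ b ∈ F)
    (hinter : ∀ a ∈ F, ∀ b ∈ F, a ∩ b ∈ F) :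
    ∃ h : X ≃ₜ LUltra F, ∀ x : X, (h x).sets = {s ∈ F | x ∈ s} :=
  wallman_of_closed_base_general X F hclosed hbase huniv hinter
end

section
/- A bounded distributive separative lattice L is normal (for all a, b with a ∧ b = 0 there exist c, d with c ∨ d = 1, c ∧ a = 0, d ∧ b = 0) if and only if its Wallman space wL is Hausdorff. -/
open Set TopologicalSpace FirstOrder

universe u v

/-- An ultrafilter on an abstract bounded lattice `L` (in the Wallman sense). -/
structure LatUltra (L : Type u) [Lattice L] [BoundedOrder L] where
  sets : Set L
  top_mem : ⊤ ∈ sets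
  bot_notMem : ⊥ ∉ sets
  inf_mem : ∀ a ∈ sets, ∀ b ∈ sets, a ⊓ b ∈ sets
  superset_mem : ∀ a ∈ sets, ∀ b : L, a ≤ b → b ∈ sets
  ultra : ∀ a : L, a ∉ sets → ∃ b ∈ sets, a ⊓ b = ⊥

/-- The Wallman topology on the space of lattice ultrafilters: the sets `â = {u : a ∈ u}`
form a base for closed sets. -/
instance LatUltra.instTopologicalSpace (L : Type u) [Lattice L] [BoundedOrder L] :
    TopologicalSpace (LatUltra L) :=
  TopologicalSpace.generateFrom {s | ∃ a : L, s = {u : LatUltra L | a ∈ u.sets}ᶜ}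

/-- A lattice is normal. -/
def LatNormal (L : Type u) [Lattice L] [BoundedOrder L] : Prop :=
  ∀ a b : L, a ⊓ b = ⊥ → ∃ c d : L, c ⊔ d = ⊤ ∧ c ⊓ a = ⊥ ∧ d ⊓ b = ⊥

/-- A lattice is separative: whenever `a ≰ b` there is `c` with `c ⊓ a ≠ ⊥` and `c ⊓ b = ⊥`. -/
def LatSeparative (L : Type u) [Lattice L] [BoundedOrder L] : Prop :=
  ∀ a b : L, ¬ a ≤ b → ∃ c : L, c ⊓ a ≠ ⊥ ∧ c ⊓ b = ⊥

/-!
The basic closed sets `â` turn `⊓` into `∩` and, since ultrafilters of a distributive lattice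
are prime, `⊔` into `∪`. By the ultrafilter lemma `â = ∅` only for `a = ⊥`, and by separativity
`â = wL` only for `a = ⊤`. Hence normality of `L` says that disjoint basic closed sets have
disjoint basic open neighbourhoods. Distinct ultrafilters contain disjoint elements, so this
gives the Hausdorff property. Conversely, `wL` is compact, so in the Hausdorff case disjoint basic
closed sets have disjoint open neighbourhoods, and by compactness these can be shrunk to basic
open sets, which are closed under finite unions.
-/

namespace LatUltra

section Lattice

variable {L : Type u} [Lattice L] [BoundedOrder L]

/-- The basic closed set `â`. -/
def basic (a : L) : Set (LatUltra L) := {u | a ∈ u.sets}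

theorem isOpen_compl_basic (a : L) : IsOpen (basic a)ᶜ :=
  GenerateOpen.basic _ ⟨a, rfl⟩

theorem isClosed_basic (a : L) : IsClosed (basic a) :=
  isOpen_compl_iff.1 (isOpen_compl_basic a)

theorem basic_mono {a b : L} (h : a ≤ b) : basic a ⊆ basic b :=
  fun u hu => u.superset_mem a hu b h

theorem basic_inf (a b : L) : basic (a ⊓ b) = basic a ∩ basic b :=
  Subset.antisymm (subset_inter (basic_mono inf_le_left) (basic_mono inf_le_right))
    fun u hu => u.inf_mem a hu.1 b hu.2

theorem basic_top : basic (⊤ : L) = univ :=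
  eq_univ_of_forall top_mem

theorem basic_bot : basic (⊥ : L) = ∅ :=
  eq_empty_of_forall_notMem bot_notMem

theorem sets_injective : Function.Injective (sets : LatUltra L → Set L) := by
  rintro ⟨⟩ ⟨⟩ rfl
  rfl

theorem eq_of_sets_subset {u v : LatUltra L} (h : u.sets ⊆ v.sets) : u = v := by
  refine sets_injective (h.antisymm fun a hav => by_contra fun hau => ?_)
  obtain ⟨b, hbu, hab⟩ := u.ultra a hau
  exact v.bot_notMem (hab ▸ v.inf_mem a hav b (h hbu))

theorem exists_mem_notMem_of_ne {u v : LatUltra L} (h : u ≠ v) :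
    ∃ a ∈ u.sets, a ∉ v.sets := by
  simpa only [not_subset] using mt eq_of_sets_subset h

/-- Mathlib's filters on `L` are the ideals of `Lᵒᵈ`. -/
def ofMaximal (J : Order.Ideal Lᵒᵈ) [hJ : J.IsMaximal] : LatUltra L where
  sets := OrderDual.toDual ⁻¹' J
  top_mem := J.bot_mem
  bot_notMem := Order.Ideal.isProper_iff_top_notMem.1 hJ.toIsProper
  inf_mem _ ha _ hb := J.sup_mem ha hb
  superset_mem a ha b hab := J.lower hab ha
  ultra a ha := by
    have hlt : J < J ⊔ Order.Ideal.principal (OrderDual.toDual a) :=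
      lt_of_le_of_ne le_sup_left fun h => ha <| h ▸ Order.Ideal.mem_sup.2
        ⟨⊥, J.bot_mem, _, Order.Ideal.mem_principal_self, le_sup_right⟩
    -- by maximality `⊥ ∈ J ⊔ ↓a`, that is `i ⊓ a = ⊥` for some `i` of the filter
    obtain ⟨i, hi, j, hj, htop⟩ := Order.Ideal.mem_sup.1
      (hJ.maximal_proper hlt ▸ mem_univ (⊤ : Lᵒᵈ))
    refine ⟨OrderDual.ofDual i, hi, le_bot_iff.1 ?_⟩
    calc a ⊓ OrderDual.ofDual i ≤ OrderDual.ofDual j ⊓ OrderDual.ofDual i :=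
          inf_le_inf_right _ (Order.Ideal.mem_principal.1 hj)
      _ ≤ ⊥ := by rw [inf_comm]; exact htop

theorem exists_superset_of_bot_notMem (F : Order.PFilter L) (hF : ⊥ ∉ F) :
    ∃ u : LatUltra L, (F : Set L) ⊆ u.sets := by
  obtain ⟨J, hFJ, hJ⟩ :=
    (Order.Ideal.isProper_iff_top_notMem (I := F.dual)).2 hF |>.exists_le_maximal
  exact ⟨ofMaximal J, fun _ ha => hFJ ha⟩

theorem exists_mem_of_ne_bot {a : L} (ha : a ≠ ⊥) : ∃ u : LatUltra L, a ∈ u.sets := by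
  obtain ⟨u, hu⟩ := exists_superset_of_bot_notMem (Order.PFilter.principal a)
    fun h => ha (le_bot_iff.1 h)
  exact ⟨u, hu le_rfl⟩

theorem basic_eq_empty_iff {a : L} : basic a = ∅ ↔ a = ⊥ := by
  refine ⟨fun h => by_contra fun ha => ?_, fun h => h ▸ basic_bot⟩
  obtain ⟨u, hu⟩ := exists_mem_of_ne_bot ha
  exact (h ▸ hu : u ∈ (∅ : Set (LatUltra L)))

theorem disjoint_basic_iff {a b : L} : Disjoint (basic a) (basic b) ↔ a ⊓ b = ⊥ := by
  rw [disjoint_iff_inter_eq_empty, ← basic_inf, basic_eq_empty_iff]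

theorem basic_eq_univ_iff (hsep : LatSeparative L) {a : L} : basic a = univ ↔ a = ⊤ := by
  refine ⟨fun h => by_contra fun ha => ?_, fun h => h ▸ basic_top⟩
  obtain ⟨c, hc, hca⟩ := hsep ⊤ a fun h => ha (top_le_iff.1 h)
  rw [inf_top_eq] at hc
  obtain ⟨u, hu⟩ := exists_mem_of_ne_bot hc
  exact (disjoint_basic_iff.2 hca).notMem_of_mem_left hu (h ▸ mem_univ u)

theorem le_nhds_iff {f : Filter (LatUltra L)} {u : LatUltra L} :
    f ≤ nhds u ↔ ∀ a ∉ u.sets, (basic a)ᶜ ∈ f := by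
  simp only [nhds_generateFrom, le_iInf_iff, Filter.le_principal_iff, mem_ofPred_eq, and_imp]
  refine ⟨fun h a ha => h _ ha ⟨a, rfl⟩, ?_⟩
  rintro h _ hu ⟨a, rfl⟩
  exact h a hu

/-- A Mathlib ultrafilter converges to any lattice ultrafilter extending the trace
`{a | basic a ∈ f}`, which is a proper filter of `L`. -/
instance : CompactSpace (LatUltra L) := by
  refine ⟨isCompact_iff_ultrafilter_le_nhds'.2 fun f _ => ?_⟩
  have hF : Order.IsPFilter {a : L | basic a ∈ f} :=
    .of_def ⟨⊤, show basic ⊤ ∈ f by rw [basic_top]; exact Filter.univ_mem⟩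
      (fun a ha b hb => ⟨a ⊓ b,
        show basic (a ⊓ b) ∈ f by rw [basic_inf]; exact Filter.inter_mem ha hb,
        inf_le_left, inf_le_right⟩)
      fun hab ha => f.mem_of_superset ha (basic_mono hab)
  obtain ⟨u, hu⟩ := exists_superset_of_bot_notMem hF.toPFilter
    (show basic ⊥ ∉ f by rw [basic_bot]; exact f.empty_notMem)
  refine ⟨u, mem_univ u, le_nhds_iff.2 fun a ha => ?_⟩
  exact f.compl_mem_iff_notMem.2 fun h => ha (hu h)

end Lattice

section DistribLattice

variable {L : Type u} [DistribLattice L] [BoundedOrder L]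

theorem basic_sup (a b : L) : basic (a ⊔ b) = basic a ∪ basic b := by
  refine Subset.antisymm (fun u hu => by_contra fun h => ?_)
    (union_subset (basic_mono le_sup_left) (basic_mono le_sup_right))
  obtain ⟨c, hcu, hac⟩ := u.ultra a fun ha => h (Or.inl ha)
  obtain ⟨d, hdu, hbd⟩ := u.ultra b fun hb => h (Or.inr hb)
  have hbot : (a ⊔ b) ⊓ (c ⊓ d) = ⊥ := by
    rw [inf_sup_right, ← inf_assoc, hac, inf_comm c, ← inf_assoc, hbd]
    simp
  exact u.bot_notMem (hbot ▸ u.inf_mem _ hu _ (u.inf_mem c hcu d hdu))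

theorem isTopologicalBasis_compl_basic :
    IsTopologicalBasis {s | ∃ a : L, s = (basic a)ᶜ} where
  exists_subset_inter := by
    rintro _ ⟨a, rfl⟩ _ ⟨b, rfl⟩ u hu
    exact ⟨_, ⟨a ⊔ b, rfl⟩, by rwa [basic_sup, compl_union], by rw [basic_sup, compl_union]⟩
  sUnion_eq := sUnion_eq_univ_iff.2 fun u => ⟨_, ⟨⊥, rfl⟩, by simp [basic_bot]⟩
  eq_generateFrom := rfl

/-- Complements of basic sets are closed under finite unions, so a compact set inside an open
set already lies inside a single one of them. -/
theorem exists_compl_basic_between {K U : Set (LatUltra L)} (hK : IsCompact K) (hU : IsOpen U)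
    (hKU : K ⊆ U) : ∃ c : L, K ⊆ (basic c)ᶜ ∧ (basic c)ᶜ ⊆ U := by
  let ι := {c : L // (basic c)ᶜ ⊆ U}
  have : Nonempty ι := ⟨⟨⊤, by simp [basic_top]⟩⟩
  have hcover : K ⊆ ⋃ c : ι, (basic c.1)ᶜ := fun u hu => by
    obtain ⟨_, ⟨c, rfl⟩, huc, hcU⟩ :=
      isTopologicalBasis_compl_basic.exists_subset_of_mem_open (hKU hu) hU
    exact mem_iUnion.2 ⟨⟨c, hcU⟩, huc⟩
  have hdir : Directed (· ⊆ ·) fun c : ι => (basic c.1)ᶜ := fun c d =>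
    ⟨⟨c.1 ⊓ d.1, by rw [basic_inf, compl_inter]; exact union_subset c.2 d.2⟩,
      compl_subset_compl.2 (basic_mono inf_le_left), compl_subset_compl.2 (basic_mono inf_le_right)⟩
  obtain ⟨⟨c, hcU⟩, hKc⟩ :=
    hK.elim_directed_cover _ (fun c : ι => isOpen_compl_basic c.1) hcover hdir
  exact ⟨c, hKc, hcU⟩

end DistribLattice

end LatUltra

open LatUltra

theorem t2Space_of_latNormal {L : Type u} [DistribLattice L] [BoundedOrder L]
    (hnorm : LatNormal L) : T2Space (LatUltra L) := by
  refine ⟨fun u v huv => ?_⟩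
  obtain ⟨a, hau, hav⟩ := exists_mem_notMem_of_ne huv
  obtain ⟨b, hbv, hab⟩ := v.ultra a hav
  obtain ⟨c, d, hcd, hca, hdb⟩ := hnorm a b hab
  refine ⟨(basic c)ᶜ, (basic d)ᶜ, isOpen_compl_basic c, isOpen_compl_basic d,
    (disjoint_basic_iff.2 hca).notMem_of_mem_right hau,
    (disjoint_basic_iff.2 hdb).notMem_of_mem_right hbv, ?_⟩
  rw [disjoint_compl_right_iff_subset, compl_subset_iff_union, ← basic_sup, hcd, basic_top]

theorem latNormal_of_t2Space {L : Type u} [DistribLattice L] [BoundedOrder L]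
    (hsep : LatSeparative L) [T2Space (LatUltra L)] : LatNormal L := by
  intro a b hab
  have hcompact (x : L) : IsCompact (basic x) := (isClosed_basic x).isCompact
  obtain ⟨U, V, hU, hV, haU, hbV, hUV⟩ :=
    SeparatedNhds.of_isCompact_isCompact (hcompact a) (hcompact b) (disjoint_basic_iff.2 hab)
  obtain ⟨c, hac, hcU⟩ := exists_compl_basic_between (hcompact a) hU haU
  obtain ⟨d, hbd, hdV⟩ := exists_compl_basic_between (hcompact b) hV hbV
  refine ⟨c, d, (basic_eq_univ_iff hsep).1 ?_, disjoint_basic_iff.1 ?_, disjoint_basic_iff.1 ?_⟩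
  · rw [basic_sup, ← compl_subset_iff_union, ← disjoint_compl_right_iff_subset]
    exact hUV.mono hcU hdV
  · exact subset_compl_iff_disjoint_left.1 hac
  · exact subset_compl_iff_disjoint_left.1 hbd

/-- A bounded distributive separative lattice is normal iff its Wallman space
is Hausdorff. -/
theorem latNormal_iff_t2 (L : Type u) [DistribLattice L] [BoundedOrder L]
    (hsep : LatSeparative L) :
    LatNormal L ↔ T2Space (LatUltra L) :=
  ⟨t2Space_of_latNormal, fun _ => latNormal_of_t2Space hsep⟩
end

section
/- Let X be a Hausdorff continuum, κ a sufficiently large regular cardinal with X ∈ H(κ), and M ≺ H(κ) a countable elementary submodel with X ∈ M. Then L = 2^X ∩ M is a countable normal sublattice of the lattice of closed subsets of X, and its Wallman space wL is a metrizable continuum. -/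
open Set TopologicalSpace FirstOrder

universe u v

/-- `x ∈ H(κ)`: `x` hereditarily has cardinality `< κ` (for regular `κ` this agrees with
`|TC(x)| < κ`). -/
def HeredLt (κ : Cardinal.{1}) (x : ZFSet.{0}) : Prop :=
  ZFSet.mem_wf.fix (fun x ih => Cardinal.mk x.toSet < κ ∧ ∀ y, ∀ h : y ∈ x, ih y h) x

/-- `ZFSet` as a structure for the language with one binary relation, interpreted as `∈`. -/
instance ZFSet.memLangStructure : FirstOrder.Language.graph.Structure ZFSet.{0} where
  funMap := fun {_} f => isEmptyElim f
  RelMap := fun {_} r => match r with | .adj => fun x => x 0 ∈ x 1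

/-- `H(κ)` as a substructure of the universe of sets with membership. -/
def HKappa (κ : Cardinal.{1}) : FirstOrder.Language.graph.Substructure ZFSet.{0} where
  carrier := {x | HeredLt κ x}
  fun_mem := fun {_} f => isEmptyElim f

/-- `z` belongs to the elementary submodel `M ≺ H(κ)`. -/
def MemOf (κ : Cardinal.{1})
    (M : FirstOrder.Language.graph.ElementarySubstructure (HKappa κ))
    (z : ZFSet.{0}) : Prop :=
  ∃ h : z ∈ HKappa κ, (⟨z, h⟩ : HKappa κ) ∈ M

/-- The ZF-set coding a subset `A` of (the extension of) the ZF-set `X`. -/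
noncomputable def codeSet (X : ZFSet.{0}) (A : Set ↥X.toSet) : ZFSet.{0} :=
  ZFSet.sep (fun y => ∃ h : y ∈ X.toSet, (⟨y, h⟩ : ↥X.toSet) ∈ A) X

/-- The subset of `X` decoded from a ZF-set `t`. -/
def decodeSet (X : ZFSet.{0}) (t : ZFSet.{0}) : Set ↥X.toSet :=
  {p : ↥X.toSet | (p : ZFSet) ∈ t}

/-- The ZF-set coding the topology of the space `X`: the set of codes of open subsets. -/
noncomputable def opensZ (X : ZFSet.{0}) [TopologicalSpace ↥X.toSet] : ZFSet.{0} :=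
  ZFSet.sep (fun t => IsOpen (decodeSet X t)) X.powerset

/-- The lattice `L = 2^X ∩ M`: the closed subsets of `X` whose codes belong to `M`. -/
def Lfam (X : ZFSet.{0}) [TopologicalSpace ↥X.toSet] (κ : Cardinal.{1})
    (M : FirstOrder.Language.graph.ElementarySubstructure (HKappa κ)) :
    Set (Set ↥X.toSet) :=
  {A | IsClosed A ∧ MemOf κ M (codeSet X A)}

/-! `M` contains every member of `H(κ)` definable from parameters in `M`, so `L` is closed under
finite unions and intersections and contains the complement of every open set coded in `M`.
Normality of `L` is the reflection to `M` of the separation of disjoint closed sets of the normal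
space `X` by disjoint open sets. The Wallman space of a lattice is compact, Hausdorff when the
lattice is normal, and second countable when it is countable, hence metrizable. It is connected
when `X` is: a clopen subset of `wL` is a basic set `â`, and normality turns a clopen partition
`â, b̂` of `wL` into a partition of `X` into two closed members of `L`. -/

def IsNormalLattice {α : Type u} (F : Set (Set α)) : Prop :=
  ∀ a ∈ F, ∀ b ∈ F, a ∩ b = ∅ →
    ∃ c ∈ F, ∃ d ∈ F, c ∪ d = Set.univ ∧ c ∩ a = ∅ ∧ d ∩ b = ∅

structure IsLFilter {α : Type u} (F G : Set (Set α)) : Prop where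
  subset : G ⊆ F
  univ_mem : Set.univ ∈ G
  empty_notMem : ∅ ∉ G
  inter_mem : ∀ a ∈ G, ∀ b ∈ G, a ∩ b ∈ G
  superset_mem : ∀ a ∈ G, ∀ b ∈ F, a ⊆ b → b ∈ G

namespace IsLFilter

variable {α : Type u} {F G : Set (Set α)}

theorem sInter_mem (hG : IsLFilter F G) {T : Set (Set α)} (hT : T.Finite) (hTG : T ⊆ G) :
    ⋂₀ T ∈ G := by
  induction T, hT using Set.Finite.induction_on with
  | empty => simpa using hG.univ_mem
  | insert _ _ ih =>
    rw [sInter_insert]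
    exact hG.inter_mem _ (hTG (mem_insert _ _)) _ (ih ((subset_insert _ _).trans hTG))

theorem generate (huniv : Set.univ ∈ F) (hinf : InfClosed F) {S : Set (Set α)}
    (hS : ∀ T ⊆ S, T.Finite → (⋂₀ T).Nonempty) :
    IsLFilter F {c | c ∈ F ∧ ∃ T ⊆ S, T.Finite ∧ ⋂₀ T ⊆ c} where
  subset _ hc := hc.1
  univ_mem := ⟨huniv, ∅, empty_subset _, finite_empty, subset_univ _⟩
  empty_notMem := fun ⟨_, T, hTS, hT, hT0⟩ => (hS T hTS hT).ne_empty (subset_empty_iff.1 hT0)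
  inter_mem := by
    rintro a ⟨ha, T₁, hT₁S, hT₁, h₁⟩ b ⟨hb, T₂, hT₂S, hT₂, h₂⟩
    refine ⟨hinf ha hb, T₁ ∪ T₂, union_subset hT₁S hT₂S, hT₁.union hT₂, ?_⟩
    rw [sInter_union]
    exact inter_subset_inter h₁ h₂
  superset_mem := fun _ ⟨_, T, hTS, hT, hTa⟩ _ hb hab => ⟨hb, T, hTS, hT, hTa.trans hab⟩

theorem sUnion_of_isChain {c : Set (Set (Set α))} (hc : ∀ G ∈ c, IsLFilter F G)
    (hchain : IsChain (· ⊆ ·) c) (hne : c.Nonempty) : IsLFilter F (⋃₀ c) where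
  subset := sUnion_subset fun G hG => (hc G hG).subset
  univ_mem := hne.elim fun G hG => ⟨G, hG, (hc G hG).univ_mem⟩
  empty_notMem := fun ⟨G, hG, h⟩ => (hc G hG).empty_notMem h
  inter_mem := by
    rintro a ⟨G₁, hG₁, ha⟩ b ⟨G₂, hG₂, hb⟩
    rcases hchain.total hG₁ hG₂ with h | h
    · exact ⟨G₂, hG₂, (hc G₂ hG₂).inter_mem a (h ha) b hb⟩
    · exact ⟨G₁, hG₁, (hc G₁ hG₁).inter_mem a ha b (h hb)⟩
  superset_mem := fun a ⟨G, hG, ha⟩ b hb hab => ⟨G, hG, (hc G hG).superset_mem a ha b hb hab⟩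

/-- A maximal `L`-filter is ultra: adjoining a member meeting all of its sets would generate a
larger `L`-filter. -/
theorem exists_lultra (huniv : Set.univ ∈ F) (hinf : InfClosed F) (hG : IsLFilter F G) :
    ∃ u : LUltra F, G ⊆ u.sets := by
  obtain ⟨H, hGH, hmax⟩ := zorn_subset_nonempty {H | IsLFilter F H}
    (fun c hc hchain hne => ⟨⋃₀ c, sUnion_of_isChain hc hchain hne,
      fun _ => subset_sUnion_of_mem⟩) G hG
  have hH : IsLFilter F H := hmax.prop
  refine ⟨⟨H, hH.subset, hH.univ_mem, hH.empty_notMem, hH.inter_mem, hH.superset_mem,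
    fun a ha haH => ?_⟩, hGH⟩
  by_contra! hmeet
  have hfip : ∀ T ⊆ insert a H, T.Finite → (⋂₀ T).Nonempty := by
    intro T hTS hT
    have hrest := hH.sInter_mem (hT.sdiff (t := {a})) fun b hb => (hTS hb.1).resolve_left hb.2
    refine (hmeet _ hrest).mono fun x hx => ?_
    rintro b hb
    by_cases hba : b = a
    · exact hba ▸ hx.1
    · exact hx.2 b ⟨hb, hba⟩
  have hgen := generate huniv hinf hfip
  have hHgen : H ⊆ {c | c ∈ F ∧ ∃ T ⊆ insert a H, T.Finite ∧ ⋂₀ T ⊆ c} :=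
    fun b hb => ⟨hH.subset hb, {b}, by simp [hb], finite_singleton b, by simp⟩
  exact haH (hmax.eq_of_subset hgen hHgen ▸
    ⟨ha, {a}, by simp, finite_singleton a, by simp⟩)

end IsLFilter

namespace LUltra

variable {α : Type u} {F : Set (Set α)}

/-- The basic closed set `â` of the Wallman space. -/
def hat (F : Set (Set α)) (a : Set α) : Set (LUltra F) := {u | a ∈ u.sets}

theorem isLFilter (u : LUltra F) : IsLFilter F u.sets :=
  ⟨u.sets_subset, u.univ_mem, u.empty_notMem, u.inter_mem, u.superset_mem⟩

theorem eq_of_sets_subset {u v : LUltra F} (h : u.sets ⊆ v.sets) : u = v := by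
  refine ext_sets (h.antisymm fun a hav => ?_)
  by_contra hau
  obtain ⟨b, hbu, hab⟩ := u.ultra a (v.sets_subset hav) hau
  exact v.empty_notMem (hab ▸ v.inter_mem a hav b (h hbu))

theorem inter_ne_empty (u : LUltra F) {a b : Set α} (ha : a ∈ u.sets) (hb : b ∈ u.sets) :
    a ∩ b ≠ ∅ :=
  fun h => u.empty_notMem (h ▸ u.inter_mem a ha b hb)

theorem exists_of_finite_inter (huniv : Set.univ ∈ F) (hinf : InfClosed F) {S : Set (Set α)}
    (hSF : S ⊆ F) (hS : ∀ T ⊆ S, T.Finite → (⋂₀ T).Nonempty) : ∃ u : LUltra F, S ⊆ u.sets := by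
  obtain ⟨u, hu⟩ := (IsLFilter.generate huniv hinf hS).exists_lultra huniv hinf
  exact ⟨u, fun a ha => hu ⟨hSF ha, {a}, by simpa using ha, finite_singleton a, by simp⟩⟩

@[simp] theorem hat_univ : hat F Set.univ = Set.univ := by
  ext u; simp [hat, u.univ_mem]

@[simp] theorem hat_empty : hat F ∅ = ∅ := by
  ext u; simp [hat, u.empty_notMem]

theorem hat_inter {a b : Set α} (ha : a ∈ F) (hb : b ∈ F) :
    hat F (a ∩ b) = hat F a ∩ hat F b := by
  ext u
  exact ⟨fun h => ⟨u.superset_mem _ h a ha inter_subset_left,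
    u.superset_mem _ h b hb inter_subset_right⟩, fun h => u.inter_mem a h.1 b h.2⟩

/-- An `L`-ultrafilter is prime: if it contained neither `a` nor `b`, it would contain sets
`c, d` disjoint from them, and `(a ∪ b) ∩ c ∩ d = ∅`. -/
theorem hat_union (hsup : SupClosed F) {a b : Set α} (ha : a ∈ F) (hb : b ∈ F) :
    hat F (a ∪ b) = hat F a ∪ hat F b := by
  ext u
  refine ⟨fun h => ?_, ?_⟩
  · by_contra hab
    obtain ⟨hna, hnb⟩ := not_or.1 hab
    obtain ⟨c, hc, hac⟩ := u.ultra a ha hna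
    obtain ⟨d, hd, hbd⟩ := u.ultra b hb hnb
    refine u.inter_ne_empty h (u.inter_mem c hc d hd) ?_
    rw [union_inter_distrib_right, ← inter_assoc, hac, ← inter_assoc, inter_right_comm, hbd]
    simp
  · rintro (h | h)
    · exact u.superset_mem a h _ (hsup ha hb) subset_union_left
    · exact u.superset_mem b h _ (hsup ha hb) subset_union_right

theorem hat_nonempty (huniv : Set.univ ∈ F) (hinf : InfClosed F) {a : Set α} (ha : a ∈ F)
    (hne : a.Nonempty) : (hat F a).Nonempty := by
  obtain ⟨u, hu⟩ := exists_of_finite_inter huniv hinf (singleton_subset_iff.2 ha)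
    fun T hT _ => hne.mono (subset_sInter fun b hb => (hT hb).symm ▸ subset_rfl)
  exact ⟨u, hu rfl⟩

theorem disjoint_hat_iff (huniv : Set.univ ∈ F) (hinf : InfClosed F) {a b : Set α}
    (ha : a ∈ F) (hb : b ∈ F) : Disjoint (hat F a) (hat F b) ↔ a ∩ b = ∅ := by
  rw [disjoint_iff_inter_eq_empty, ← hat_inter ha hb]
  refine ⟨fun h => not_nonempty_iff_eq_empty.1 fun hne => ?_, fun h => h ▸ hat_empty⟩
  exact (hat_nonempty huniv hinf (hinf ha hb) hne).ne_empty h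

theorem isOpen_compl_hat {a : Set α} (ha : a ∈ F) : IsOpen (hat F a)ᶜ :=
  TopologicalSpace.GenerateOpen.basic _ ⟨a, ha, rfl⟩

theorem isClosed_hat {a : Set α} (ha : a ∈ F) : IsClosed (hat F a) :=
  isOpen_compl_iff.1 (isOpen_compl_hat ha)

theorem exists_hat_of_notMem_isClosed (hempty : ∅ ∈ F) (hsup : SupClosed F)
    {C : Set (LUltra F)} (hC : IsClosed C) {u : LUltra F} (hu : u ∉ C) :
    ∃ a ∈ F, C ⊆ hat F a ∧ u ∉ hat F a := by
  have hbasis := isTopologicalBasis_of_subbasis_of_inter (r := {s | ∃ a ∈ F, s = (hat F a)ᶜ})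
    rfl (by
      rintro _ ⟨a, ha, rfl⟩ _ ⟨b, hb, rfl⟩
      exact ⟨a ∪ b, hsup ha hb, by rw [hat_union hsup ha hb, compl_union]⟩)
  obtain ⟨s, hs, hus, hsC⟩ := hbasis.exists_subset_of_mem_open hu hC.isOpen_compl
  rcases hs with rfl | ⟨a, ha, rfl⟩
  · exact ⟨∅, hempty, by simpa using hsC, by simp⟩
  · exact ⟨a, ha, fun v hv => by_contra fun h => hsC h hv, hus⟩

theorem compactSpace (huniv : Set.univ ∈ F) (hinf : InfClosed F) : CompactSpace (LUltra F) := by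
  refine ⟨isCompact_generateFrom rfl fun P hP hcover => ?_⟩
  set S := {a | a ∈ F ∧ (hat F a)ᶜ ∈ P}
  obtain ⟨T, hTS, hT, hTempty⟩ : ∃ T ⊆ S, T.Finite ∧ ⋂₀ T = ∅ := by
    by_contra! hfip
    obtain ⟨u, hu⟩ := exists_of_finite_inter huniv hinf (fun a ha => ha.1)
      fun T hTS hT => hfip T hTS hT
    obtain ⟨s, hsP, hus⟩ := hcover (mem_univ u)
    obtain ⟨a, ha, rfl⟩ := hP hsP
    exact hus (hu ⟨ha, hsP⟩)
  refine ⟨(fun a => (hat F a)ᶜ) '' T, image_subset_iff.2 fun a ha => (hTS ha).2,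
    hT.image _, fun u _ => ?_⟩
  by_contra hu
  refine u.empty_notMem (hTempty ▸ u.isLFilter.sInter_mem hT fun a ha => ?_)
  by_contra hau
  exact hu ⟨_, mem_image_of_mem _ ha, hau⟩

theorem exists_eq_hat_of_isClopen (hempty : ∅ ∈ F) (huniv : Set.univ ∈ F) (hsup : SupClosed F)
    (hinf : InfClosed F) {s : Set (LUltra F)} (hs : IsClopen s) : ∃ a ∈ F, s = hat F a := by
  have := compactSpace huniv hinf
  let t : {a // a ∈ F ∧ s ⊆ hat F a} → Set (LUltra F) := fun a => hat F a
  have : Nonempty {a // a ∈ F ∧ s ⊆ hat F a} := ⟨⟨univ, huniv, by simp⟩⟩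
  have hdir : Directed (· ⊇ ·) t := fun a b =>
    ⟨⟨a.1 ∩ b.1, hinf a.2.1 b.2.1, by rw [hat_inter a.2.1 b.2.1]; exact subset_inter a.2.2 b.2.2⟩,
      by simp only [t, hat_inter a.2.1 b.2.1]; exact ⟨inter_subset_left, inter_subset_right⟩⟩
  have hinter : sᶜ ∩ ⋂ a, t a = ∅ := by
    refine eq_empty_iff_forall_notMem.2 fun u ⟨hus, hut⟩ => ?_
    obtain ⟨a, ha, hsa, hua⟩ := exists_hat_of_notMem_isClosed hempty hsup hs.isClosed hus
    exact hua (mem_iInter.1 hut ⟨a, ha, hsa⟩)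
  obtain ⟨⟨a, ha, hsa⟩, hta⟩ := hs.isOpen.isClosed_compl.isCompact.elim_directed_family_closed t
    (fun a => isClosed_hat a.2.1) hinter hdir
  refine ⟨a, ha, hsa.antisymm fun u hu => by_contra fun hus => ?_⟩
  exact (eq_empty_iff_forall_notMem.1 hta) u ⟨hus, hu⟩

theorem t2Space (hsup : SupClosed F) (hnormal : IsNormalLattice F) : T2Space (LUltra F) := by
  refine ⟨fun u v huv => ?_⟩
  obtain ⟨a, hau, hav⟩ := not_subset.1 (mt eq_of_sets_subset huv)
  obtain ⟨b, hbv, hab⟩ := v.ultra a (u.sets_subset hau) hav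
  obtain ⟨c, hc, d, hd, hcd, hca, hdb⟩ :=
    hnormal a (u.sets_subset hau) b (v.sets_subset hbv) hab
  refine ⟨(hat F c)ᶜ, (hat F d)ᶜ, isOpen_compl_hat hc, isOpen_compl_hat hd,
    fun huc => u.inter_ne_empty huc hau hca, fun hvd => v.inter_ne_empty hvd hbv hdb, ?_⟩
  rw [disjoint_compl_left_iff_subset, compl_subset_iff_union, union_comm,
    ← hat_union hsup hc hd, hcd, hat_univ]

/-- A clopen partition `â, b̂` of the Wallman space yields, by normality, members `e, f` of the
lattice with `ê ⊆ b̂` and `f̂ ⊆ â`, hence a clopen partition `e, f` of `α`. -/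
theorem connectedSpace [TopologicalSpace α] [ConnectedSpace α] (hempty : ∅ ∈ F)
    (huniv : Set.univ ∈ F) (hsup : SupClosed F) (hinf : InfClosed F)
    (hnormal : IsNormalLattice F) (hclosed : ∀ a ∈ F, IsClosed a) :
    ConnectedSpace (LUltra F) := by
  obtain ⟨u, -⟩ := hat_nonempty huniv hinf huniv univ_nonempty
  refine connectedSpace_iff_clopen.2 ⟨⟨u⟩, fun s hs => ?_⟩
  obtain ⟨a, ha, rfl⟩ := exists_eq_hat_of_isClopen hempty huniv hsup hinf hs
  obtain ⟨b, hb, hab⟩ := exists_eq_hat_of_isClopen hempty huniv hsup hinf hs.compl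
  have hba : (hat F b)ᶜ = hat F a := by rw [← hab, compl_compl]
  have hdisj : Disjoint (hat F a) (hat F b) := hab ▸ disjoint_compl_right
  obtain ⟨e, he, f, hf, hef, hea, hfb⟩ :=
    hnormal a ha b hb ((disjoint_hat_iff huniv hinf ha hb).1 hdisj)
  have heb : hat F e ⊆ hat F b :=
    hab ▸ ((disjoint_hat_iff huniv hinf he ha).2 hea).subset_compl_right
  have hfa : hat F f ⊆ hat F a :=
    hba ▸ ((disjoint_hat_iff huniv hinf hf hb).2 hfb).subset_compl_right
  have hfe : f = eᶜ := eq_compl_iff_isCompl.2 <| IsCompl.of_eq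
    ((disjoint_hat_iff huniv hinf hf he).1 (hdisj.mono hfa heb)) (by rwa [union_comm] at hef)
  rcases isClopen_iff.1 ⟨hclosed e he, isClosed_compl_iff.1 (hfe ▸ hclosed f hf)⟩ with rfl | rfl
  · right
    rw [← hba, show b = ∅ by simpa [hfe] using hfb, hat_empty, compl_empty]
  · left
    rw [show a = ∅ by simpa using hea, hat_empty]

theorem secondCountableTopology (hcount : F.Countable) : SecondCountableTopology (LUltra F) where
  is_open_generated_countable := ⟨_, (hcount.image fun a => (hat F a)ᶜ).mono
    (by rintro _ ⟨a, ha, rfl⟩; exact mem_image_of_mem _ ha), rfl⟩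

end LUltra

namespace FirstOrder.Language.ElementarySubstructure

theorem exists_realize_of_exists {L : Language} {N : Type*} [L.Structure N]
    (S : L.ElementarySubstructure N) {α β : Type*} [Finite β] (φ : L.Formula (α ⊕ β))
    (p : α → S) (h : ∃ w : β → N, φ.Realize (Sum.elim (((↑) : S → N) ∘ p) w)) :
    ∃ w : β → S, φ.Realize (Sum.elim (((↑) : S → N) ∘ p) (((↑) : S → N) ∘ w)) := by
  obtain ⟨w, hw⟩ := Formula.realize_iExs.1 <|
    (S.subtype.map_formula (φ.iExs β) p).1 (Formula.realize_iExs.2 h)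
  refine ⟨w, ?_⟩
  simpa only [coe_subtype, Sum.comp_elim] using (S.subtype.map_formula φ (Sum.elim p w)).2 hw

end FirstOrder.Language.ElementarySubstructure

theorem heredLt_iff {κ : Cardinal.{1}} {x : ZFSet.{0}} :
    HeredLt κ x ↔ Cardinal.mk x.toSet < κ ∧ ∀ y ∈ x, HeredLt κ y := by
  rw [HeredLt, WellFounded.fix_eq]
  rfl

theorem HeredLt.of_mem {κ : Cardinal.{1}} {x y : ZFSet.{0}} (hx : HeredLt κ x) (hy : y ∈ x) :
    HeredLt κ y :=
  (heredLt_iff.1 hx).2 y hy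

theorem HeredLt.of_subset {κ : Cardinal.{1}} {X z : ZFSet.{0}}
    (hX : HeredLt κ X.powerset.powerset) (hz : z ⊆ X) : HeredLt κ z :=
  (hX.of_mem (ZFSet.mem_powerset.2 fun _ => id)).of_mem (ZFSet.mem_powerset.2 hz)

theorem HeredLt.ext {κ : Cardinal.{1}} {x y : ZFSet.{0}} (hx : HeredLt κ x) (hy : HeredLt κ y)
    (h : ∀ z, HeredLt κ z → (z ∈ x ↔ z ∈ y)) : x = y :=
  ZFSet.ext fun z => ⟨fun hz => (h z (hx.of_mem hz)).1 hz, fun hz => (h z (hy.of_mem hz)).2 hz⟩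

section Coding

variable {X : ZFSet.{0}}

theorem mem_codeSet {A : Set ↥X.toSet} {y : ZFSet.{0}} :
    y ∈ codeSet X A ↔ ∃ h : y ∈ X.toSet, (⟨y, h⟩ : ↥X.toSet) ∈ A := by
  rw [codeSet, ZFSet.mem_sep]
  exact ⟨fun ⟨_, h⟩ => h, fun ⟨h, hA⟩ => ⟨h, h, hA⟩⟩

theorem coe_mem_codeSet {A : Set ↥X.toSet} {p : ↥X.toSet} : (p : ZFSet.{0}) ∈ codeSet X A ↔ p ∈ A :=
  mem_codeSet.trans ⟨fun ⟨_, h⟩ => h, fun h => ⟨p.2, h⟩⟩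

theorem codeSet_subset (A : Set ↥X.toSet) : codeSet X A ⊆ X :=
  fun _ hy => (ZFSet.mem_sep.1 hy).1

theorem decodeSet_codeSet (A : Set ↥X.toSet) : decodeSet X (codeSet X A) = A :=
  Set.ext fun _ => coe_mem_codeSet

theorem codeSet_decodeSet {t : ZFSet.{0}} (h : t ⊆ X) : codeSet X (decodeSet X t) = t :=
  ZFSet.ext fun _ => mem_codeSet.trans ⟨fun ⟨_, hy⟩ => hy, fun hy => ⟨h hy, hy⟩⟩

theorem codeSet_injective : Function.Injective (codeSet X) :=
  Function.LeftInverse.injective decodeSet_codeSet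

theorem codeSet_univ : codeSet X Set.univ = X :=
  ZFSet.ext fun _ => mem_codeSet.trans ⟨fun ⟨h, _⟩ => h, fun h => ⟨h, Set.mem_univ _⟩⟩

theorem mem_codeSet_union {A B : Set ↥X.toSet} {y : ZFSet.{0}} :
    y ∈ codeSet X (A ∪ B) ↔ y ∈ codeSet X A ∨ y ∈ codeSet X B := by
  simp only [mem_codeSet, Set.mem_union, exists_or]

theorem mem_codeSet_compl {A : Set ↥X.toSet} {y : ZFSet.{0}} :
    y ∈ codeSet X Aᶜ ↔ y ∈ X ∧ y ∉ codeSet X A := by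
  simp only [mem_codeSet, Set.mem_compl_iff, not_exists]
  exact ⟨fun ⟨h, hA⟩ => ⟨h, fun _ => hA⟩, fun ⟨h, hA⟩ => ⟨h, hA h⟩⟩

theorem mem_opensZ [TopologicalSpace ↥X.toSet] {t : ZFSet.{0}} :
    t ∈ opensZ X ↔ t ⊆ X ∧ IsOpen (decodeSet X t) := by
  rw [opensZ, ZFSet.mem_sep, ZFSet.mem_powerset]

end Coding

section Transfer

open FirstOrder.Language

def memFormula {α : Type} (i j : α) : Language.graph.Formula α :=
  Language.adj.formula₂ (Term.var i) (Term.var j)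

noncomputable def forallFormula {α : Type} (φ : Language.graph.Formula (α ⊕ Unit)) :
    Language.graph.Formula α :=
  φ.iAlls Unit

variable {κ : Cardinal.{1}} (M : Language.graph.ElementarySubstructure (HKappa κ))

@[simp] theorem realize_memFormula {α : Type} (i j : α) (v : α → HKappa κ) :
    (memFormula i j).Realize v ↔ (v i : ZFSet.{0}) ∈ (v j : ZFSet.{0}) :=
  Iff.rfl

@[simp] theorem realize_forallFormula {α : Type} (φ : Language.graph.Formula (α ⊕ Unit))
    (v : α → HKappa κ) :
    (forallFormula φ).Realize v ↔ ∀ y : HKappa κ, φ.Realize (Sum.elim v fun _ => y) := by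
  rw [forallFormula, Formula.realize_iAlls]
  exact ⟨fun h y => h fun _ => y, fun h i => h (i ())⟩

def MemOf.elem {z : ZFSet.{0}} (h : MemOf κ M z) : M := ⟨⟨z, h.1⟩, h.2⟩

@[simp] theorem MemOf.coe_elem {z : ZFSet.{0}} (h : MemOf κ M z) :
    (((h.elem M : M) : HKappa κ) : ZFSet.{0}) = z :=
  rfl

theorem memOf_coe (m : M) : MemOf κ M ((m : HKappa κ) : ZFSet.{0}) :=
  ⟨m.1.2, m.2⟩

/-- A member of `H(κ)` definable from parameters in `M` belongs to `M`: the defining property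
has a witness in `M`, and extensionality in `H(κ)` identifies it with `z`. -/
theorem memOf_of_forall_mem_iff {α : Type} [Finite α]
    (ψ : Language.graph.Formula (α ⊕ Unit)) (p : α → M) {z : ZFSet.{0}} (hz : HeredLt κ z)
    (hψ : ∀ y : HKappa κ, (y : ZFSet.{0}) ∈ z ↔ ψ.Realize (Sum.elim ((↑) ∘ p) fun _ => y)) :
    MemOf κ M z := by
  let φ : Language.graph.Formula (α ⊕ Unit) := forallFormula
    ((memFormula (Sum.inr ()) (Sum.inl (Sum.inr ()))).iff (ψ.relabel (Sum.map Sum.inl id)))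
  have hφ : ∀ w : HKappa κ, φ.Realize (Sum.elim ((↑) ∘ p) fun _ => w) ↔
      ∀ y : HKappa κ, (y : ZFSet.{0}) ∈ (w : ZFSet.{0}) ↔
        ψ.Realize (Sum.elim ((↑) ∘ p) fun _ => y) := by
    intro w
    simp only [φ, realize_forallFormula, Formula.realize_iff, realize_memFormula,
      Formula.realize_relabel, Sum.elim_comp_map, Sum.elim_inl, Sum.elim_inr]
    rfl
  obtain ⟨w, hw⟩ := M.exists_realize_of_exists φ p ⟨fun _ => ⟨z, hz⟩, (hφ _).2 hψ⟩
  have hwz : ((w () : HKappa κ) : ZFSet.{0}) = z :=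
    HeredLt.ext (w ()).1.2 hz fun y hy => ((hφ _).1 hw ⟨y, hy⟩).trans (hψ ⟨y, hy⟩).symm
  exact hwz ▸ memOf_coe M (w ())

end Transfer

namespace Lfam

open FirstOrder.Language

variable {X : ZFSet.{0}} {κ : Cardinal.{1}} (M : Language.graph.ElementarySubstructure (HKappa κ))

theorem memOf_codeSet_union (hbig : HeredLt κ X.powerset.powerset) {A B : Set ↥X.toSet}
    (hA : MemOf κ M (codeSet X A)) (hB : MemOf κ M (codeSet X B)) :
    MemOf κ M (codeSet X (A ∪ B)) :=
  memOf_of_forall_mem_iff M (memFormula (Sum.inr ()) (Sum.inl 0) ⊔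
      memFormula (Sum.inr ()) (Sum.inl 1)) ![hA.elem M, hB.elem M]
    (HeredLt.of_subset hbig (codeSet_subset _)) fun y => by
    simp [mem_codeSet_union]

theorem memOf_codeSet_compl (hbig : HeredLt κ X.powerset.powerset) (hXM : MemOf κ M X)
    {A : Set ↥X.toSet} (hA : MemOf κ M (codeSet X A)) : MemOf κ M (codeSet X Aᶜ) :=
  memOf_of_forall_mem_iff M (memFormula (Sum.inr ()) (Sum.inl 0) ⊓
      (memFormula (Sum.inr ()) (Sum.inl 1)).not) ![hXM.elem M, hA.elem M]
    (HeredLt.of_subset hbig (codeSet_subset _)) fun y => by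
    simp [mem_codeSet_compl]

def SeparatesIn (κ : Cardinal.{1}) (a b u w : ZFSet.{0}) : Prop :=
  ∀ z : HKappa κ, ((z : ZFSet.{0}) ∈ a → (z : ZFSet.{0}) ∈ u) ∧
    ((z : ZFSet.{0}) ∈ b → (z : ZFSet.{0}) ∈ w) ∧ ¬((z : ZFSet.{0}) ∈ u ∧ (z : ZFSet.{0}) ∈ w)

theorem exists_memOf_separatesIn {T a b : ZFSet.{0}} (hT : MemOf κ M T) (ha : MemOf κ M a)
    (hb : MemOf κ M b)
    (h : ∃ u w : HKappa κ, (u : ZFSet.{0}) ∈ T ∧ (w : ZFSet.{0}) ∈ T ∧ SeparatesIn κ a b u w) :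
    ∃ u w : ZFSet.{0}, MemOf κ M u ∧ MemOf κ M w ∧ u ∈ T ∧ w ∈ T ∧ SeparatesIn κ a b u w := by
  let P : Fin 3 → M := ![hT.elem M, ha.elem M, hb.elem M]
  let z : (Fin 3 ⊕ Fin 2) ⊕ Unit := Sum.inr ()
  let φ : Language.graph.Formula (Fin 3 ⊕ Fin 2) :=
    memFormula (Sum.inr 0) (Sum.inl 0) ⊓ memFormula (Sum.inr 1) (Sum.inl 0) ⊓ forallFormula
      ((memFormula z (Sum.inl (Sum.inl 1))).imp (memFormula z (Sum.inl (Sum.inr 0))) ⊓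
        (memFormula z (Sum.inl (Sum.inl 2))).imp (memFormula z (Sum.inl (Sum.inr 1))) ⊓
        (memFormula z (Sum.inl (Sum.inr 0)) ⊓ memFormula z (Sum.inl (Sum.inr 1))).not)
  have hφ : ∀ v : Fin 2 → HKappa κ, φ.Realize (Sum.elim (((↑) : M → HKappa κ) ∘ P) v) ↔
      ((v 0 : ZFSet.{0}) ∈ T ∧ (v 1 : ZFSet.{0}) ∈ T) ∧ SeparatesIn κ a b (v 0) (v 1) := by
    intro v
    simp [φ, P, z, SeparatesIn, and_assoc]
  obtain ⟨u, w, hu, hw, hs⟩ := h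
  obtain ⟨v, hv⟩ := M.exists_realize_of_exists φ P ⟨![u, w], (hφ _).2 ⟨⟨hu, hw⟩, hs⟩⟩
  obtain ⟨⟨hv0, hv1⟩, hsep⟩ := (hφ _).1 hv
  exact ⟨_, _, memOf_coe M (v 0), memOf_coe M (v 1), hv0, hv1, hsep⟩

theorem separatesIn_codeSet_iff (hbig : HeredLt κ X.powerset.powerset)
    {A B U V : Set ↥X.toSet} :
    SeparatesIn κ (codeSet X A) (codeSet X B) (codeSet X U) (codeSet X V) ↔
      A ⊆ U ∧ B ⊆ V ∧ Disjoint U V := by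
  have hpt : ∀ p : ↥X.toSet, HeredLt κ p :=
    fun p => (HeredLt.of_subset hbig fun _ => id).of_mem p.2
  refine ⟨fun h => ⟨fun p hp => coe_mem_codeSet.1 ((h ⟨p, hpt p⟩).1 (coe_mem_codeSet.2 hp)),
    fun p hp => coe_mem_codeSet.1 ((h ⟨p, hpt p⟩).2.1 (coe_mem_codeSet.2 hp)),
    Set.disjoint_left.2 fun p hpU hpV =>
      (h ⟨p, hpt p⟩).2.2 ⟨coe_mem_codeSet.2 hpU, coe_mem_codeSet.2 hpV⟩⟩, ?_⟩
  rintro ⟨hAU, hBV, hUV⟩ z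
  refine ⟨fun hz => ?_, fun hz => ?_, fun ⟨hzU, hzV⟩ => ?_⟩
  · obtain ⟨h, hzA⟩ := mem_codeSet.1 hz
    exact mem_codeSet.2 ⟨h, hAU hzA⟩
  · obtain ⟨h, hzB⟩ := mem_codeSet.1 hz
    exact mem_codeSet.2 ⟨h, hBV hzB⟩
  · obtain ⟨h, hzU⟩ := mem_codeSet.1 hzU
    exact Set.disjoint_left.1 hUV hzU (coe_mem_codeSet.1 hzV)

variable [TopologicalSpace ↥X.toSet]

theorem univ_mem (hXM : MemOf κ M X) : Set.univ ∈ Lfam X κ M :=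
  ⟨isClosed_univ, codeSet_univ ▸ hXM⟩

theorem compl_mem_of_isOpen (hbig : HeredLt κ X.powerset.powerset) (hXM : MemOf κ M X)
    {U : Set ↥X.toSet} (hU : IsOpen U) (hUM : MemOf κ M (codeSet X U)) : Uᶜ ∈ Lfam X κ M :=
  ⟨hU.isClosed_compl, memOf_codeSet_compl M hbig hXM hUM⟩

theorem empty_mem (hbig : HeredLt κ X.powerset.powerset) (hXM : MemOf κ M X) :
    ∅ ∈ Lfam X κ M :=
  compl_univ (α := ↥X.toSet) ▸ compl_mem_of_isOpen M hbig hXM isOpen_univ (univ_mem M hXM).2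

theorem union_mem (hbig : HeredLt κ X.powerset.powerset) {A B : Set ↥X.toSet}
    (hA : A ∈ Lfam X κ M) (hB : B ∈ Lfam X κ M) : A ∪ B ∈ Lfam X κ M :=
  ⟨hA.1.union hB.1, memOf_codeSet_union M hbig hA.2 hB.2⟩

theorem inter_mem (hbig : HeredLt κ X.powerset.powerset) (hXM : MemOf κ M X)
    {A B : Set ↥X.toSet} (hA : A ∈ Lfam X κ M) (hB : B ∈ Lfam X κ M) : A ∩ B ∈ Lfam X κ M := by
  refine ⟨hA.1.inter hB.1, ?_⟩
  rw [← compl_compl (A ∩ B), compl_inter]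
  exact memOf_codeSet_compl M hbig hXM <| memOf_codeSet_union M hbig
    (memOf_codeSet_compl M hbig hXM hA.2) (memOf_codeSet_compl M hbig hXM hB.2)

theorem countable [Countable M] : (Lfam X κ M).Countable := by
  refine Set.countable_of_injective_of_countable_image codeSet_injective.injOn
    ((Set.countable_range fun m : M => ((m : HKappa κ) : ZFSet.{0})).mono ?_)
  rintro _ ⟨A, ⟨-, hA, hAM⟩, rfl⟩
  exact ⟨⟨⟨_, hA⟩, hAM⟩, rfl⟩

theorem exists_isOpen_separation [NormalSpace ↥X.toSet] (hbig : HeredLt κ X.powerset.powerset)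
    (htopM : MemOf κ M (opensZ X)) {A B : Set ↥X.toSet} (hA : A ∈ Lfam X κ M)
    (hB : B ∈ Lfam X κ M) (hAB : A ∩ B = ∅) :
    ∃ U V : Set ↥X.toSet, IsOpen U ∧ IsOpen V ∧ MemOf κ M (codeSet X U) ∧
      MemOf κ M (codeSet X V) ∧ A ⊆ U ∧ B ⊆ V ∧ Disjoint U V := by
  obtain ⟨U, V, hU, hV, hAU, hBV, hUV⟩ :=
    NormalSpace.normal A B hA.1 hB.1 (disjoint_iff_inter_eq_empty.2 hAB)
  have hcode : ∀ W : Set ↥X.toSet, HeredLt κ (codeSet X W) :=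
    fun W => HeredLt.of_subset hbig (codeSet_subset W)
  have hopen : ∀ {W : Set ↥X.toSet}, IsOpen W → codeSet X W ∈ opensZ X :=
    fun hW => mem_opensZ.2 ⟨codeSet_subset _, (decodeSet_codeSet _).symm ▸ hW⟩
  obtain ⟨u, w, hu, hw, huT, hwT, hsep⟩ := exists_memOf_separatesIn M htopM hA.2 hB.2
    ⟨⟨_, hcode U⟩, ⟨_, hcode V⟩, hopen hU, hopen hV,
      (separatesIn_codeSet_iff hbig).2 ⟨hAU, hBV, hUV⟩⟩
  obtain ⟨huX, hUo⟩ := mem_opensZ.1 huT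
  obtain ⟨hwX, hVo⟩ := mem_opensZ.1 hwT
  rw [← codeSet_decodeSet huX] at hsep hu
  rw [← codeSet_decodeSet hwX] at hsep hw
  exact ⟨_, _, hUo, hVo, hu, hw, (separatesIn_codeSet_iff hbig).1 hsep⟩

theorem isNormalLattice [NormalSpace ↥X.toSet] (hbig : HeredLt κ X.powerset.powerset)
    (hXM : MemOf κ M X) (htopM : MemOf κ M (opensZ X)) : IsNormalLattice (Lfam X κ M) := by
  intro A hA B hB hAB
  obtain ⟨U, V, hU, hV, hUM, hVM, hAU, hBV, hUV⟩ :=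
    exists_isOpen_separation M hbig htopM hA hB hAB
  refine ⟨Uᶜ, compl_mem_of_isOpen M hbig hXM hU hUM, Vᶜ, compl_mem_of_isOpen M hbig hXM hV hVM,
    ?_, ?_, ?_⟩
  · rw [← compl_inter, disjoint_iff_inter_eq_empty.1 hUV, compl_empty]
  · exact disjoint_iff_inter_eq_empty.1 (disjoint_compl_left_iff_subset.2 hAU)
  · exact disjoint_iff_inter_eq_empty.1 (disjoint_compl_left_iff_subset.2 hBV)

end Lfam

theorem Lfam_countable_normal_and_wallman_metrizable_continuum_general
    (X : ZFSet.{0}) [TopologicalSpace ↥X.toSet] [CompactSpace ↥X.toSet]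
    [T2Space ↥X.toSet] [ConnectedSpace ↥X.toSet]
    (κ : Cardinal.{1}) (hbig : HeredLt κ X.powerset.powerset)
    (M : FirstOrder.Language.graph.ElementarySubstructure (HKappa κ))
    (hMcount : Countable M) (hXM : MemOf κ M X) (htopM : MemOf κ M (opensZ X)) :
    (Lfam X κ M).Countable ∧
    ∅ ∈ Lfam X κ M ∧ Set.univ ∈ Lfam X κ M ∧
    (∀ a ∈ Lfam X κ M, ∀ b ∈ Lfam X κ M, a ∪ b ∈ Lfam X κ M ∧ a ∩ b ∈ Lfam X κ M) ∧
    (∀ a ∈ Lfam X κ M, ∀ b ∈ Lfam X κ M, a ∩ b = ∅ →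
      ∃ c ∈ Lfam X κ M, ∃ d ∈ Lfam X κ M, c ∪ d = Set.univ ∧ c ∩ a = ∅ ∧ d ∩ b = ∅) ∧
    CompactSpace (LUltra (Lfam X κ M)) ∧ T2Space (LUltra (Lfam X κ M)) ∧
    ConnectedSpace (LUltra (Lfam X κ M)) ∧
    TopologicalSpace.MetrizableSpace (LUltra (Lfam X κ M)) := by
  have hcount := Lfam.countable (X := X) M
  have hempty := Lfam.empty_mem M hbig hXM
  have huniv := Lfam.univ_mem (X := X) M hXM
  have hsup : SupClosed (Lfam X κ M) := fun _ ha _ hb => Lfam.union_mem M hbig ha hb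
  have hinf : InfClosed (Lfam X κ M) := fun _ ha _ hb => Lfam.inter_mem M hbig hXM ha hb
  have hnormal := Lfam.isNormalLattice M hbig hXM htopM
  have := LUltra.compactSpace huniv hinf
  have := LUltra.t2Space hsup hnormal
  have := LUltra.secondCountableTopology hcount
  exact ⟨hcount, hempty, huniv, fun _ ha _ hb => ⟨hsup ha hb, hinf ha hb⟩, hnormal,
    inferInstance, inferInstance,
    LUltra.connectedSpace hempty huniv hsup hinf hnormal fun _ ha => ha.1,
    metrizableSpace_of_t3_secondCountable _⟩

/-- For a Hausdorff continuum `X`, a sufficiently large regular `κ` with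
`X ∈ H(κ)`, and a countable elementary submodel `M ≺ H(κ)` with `X ∈ M`, the lattice
`L = 2^X ∩ M` is a countable normal sublattice of the closed-set lattice of `X`, and its
Wallman space `wL` is a metrizable continuum. -/
theorem Lfam_countable_normal_and_wallman_metrizable_continuum
    (X : ZFSet.{0}) [TopologicalSpace ↥X.toSet] [CompactSpace ↥X.toSet]
    [T2Space ↥X.toSet] [ConnectedSpace ↥X.toSet]
    (κ : Cardinal.{1}) (hreg : κ.IsRegular) (hbig : HeredLt κ X.powerset.powerset)
    (M : FirstOrder.Language.graph.ElementarySubstructure (HKappa κ))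
    (hMcount : Countable M) (hXM : MemOf κ M X) (htopM : MemOf κ M (opensZ X)) :
    (Lfam X κ M).Countable ∧
    ∅ ∈ Lfam X κ M ∧ Set.univ ∈ Lfam X κ M ∧
    (∀ a ∈ Lfam X κ M, ∀ b ∈ Lfam X κ M, a ∪ b ∈ Lfam X κ M ∧ a ∩ b ∈ Lfam X κ M) ∧
    (∀ a ∈ Lfam X κ M, ∀ b ∈ Lfam X κ M, a ∩ b = ∅ →
      ∃ c ∈ Lfam X κ M, ∃ d ∈ Lfam X κ M, c ∪ d = Set.univ ∧ c ∩ a = ∅ ∧ d ∩ b = ∅) ∧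
    CompactSpace (LUltra (Lfam X κ M)) ∧ T2Space (LUltra (Lfam X κ M)) ∧
    ConnectedSpace (LUltra (Lfam X κ M)) ∧
    TopologicalSpace.MetrizableSpace (LUltra (Lfam X κ M)) :=
  Lfam_countable_normal_and_wallman_metrizable_continuum_general X κ hbig M hMcount hXM htopM
end

section
/- For a compact Hausdorff space X, the hyperspace C(X) of subcontinua of X with the Vietoris topology is homeomorphic to the Wallman space wK* of the lattice K* of subsets of C(X) generated under finite unions and intersections by the sets F* for finite F ⊆ 2^X, where F* = C(X) \ {G ∈ C(X) : G ∩ ⋂F = ∅ and G is not contained in any F ∈ F}. -/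
open Set TopologicalSpace FirstOrder

universe u v

/-- The hyperspace `C(X)` of subcontinua (nonempty closed connected subsets) of `X`. -/
def Subcontinua (X : Type u) [TopologicalSpace X] : Type u :=
  {A : Set X // IsClosed A ∧ IsConnected A}

/-- The Vietoris topology on the hyperspace of subcontinua. -/
instance Subcontinua.instTopologicalSpace (X : Type u) [TopologicalSpace X] :
    TopologicalSpace (Subcontinua X) :=
  TopologicalSpace.generateFrom
    ({s | ∃ U : Set X, IsOpen U ∧ s = {A : Subcontinua X | A.1 ⊆ U}} ∪
     {s | ∃ U : Set X, IsOpen U ∧ s = {A : Subcontinua X | (A.1 ∩ U).Nonempty}})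

/-- The basic closed set `F*` in `C(X)` determined by a finite family `F` of closed sets:
`F* = C(X) \ {G ∈ C(X) : G ∩ ⋂F = ∅ ∧ ∀ F ∈ F, ¬ G ⊆ F}`. -/
def starSet {X : Type u} [TopologicalSpace X] (F : Finset (Set X)) : Set (Subcontinua X) :=
  {G | ¬ ((G.1 ∩ ⋂₀ (↑F : Set (Set X))) = ∅ ∧ ∀ s ∈ F, ¬ G.1 ⊆ s)}

/-- The sublattice of subsets of `α` generated by a family `B` under finite unions and
finite intersections. -/
inductive LatGen {α : Type u} (B : Set (Set α)) : Set α → Prop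
  | base {s : Set α} : s ∈ B → LatGen B s
  | union {s t : Set α} : LatGen B s → LatGen B t → LatGen B (s ∪ t)
  | inter {s t : Set α} : LatGen B s → LatGen B t → LatGen B (s ∩ t)

/-!
The sets `F*` are Vietoris closed, and since `{A ⊆ U} = C(X) \ {Uᶜ}*` and
`{A ∩ U ≠ ∅} = C(X) \ {Uᶜ, ∅}*`, the complements of the members of `K*` generate the Vietoris
topology. For normal `T₁` spaces `X` the lattice `K*` is disjunctive: a continuum `G ∉ F*` lies in
`{A ⊆ D}` for a closed neighbourhood `D` of `G` missing `⋂F`, and contains for every `s ∈ F` a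
point `x_s ∉ s`, so `{A ⊆ D} ∩ ⋂ₛ {x_s}*` belongs to `K*`, contains `G` and misses `F*`.

Wallman's argument applies to any compact `T₀` space `Y` whose topology is generated by the
complements of a disjunctive lattice `L`: `y ↦ {a ∈ L | y ∈ a}` is a homeomorphism onto `wL`, the
preimage of an ultrafilter `u` being any point of `⋂ u`. It remains to show that `C(X)` is
compact: an ultrafilter `𝒰` on `C(X)` converges to the set of points each of whose neighbourhoods
is met by `𝒰`-almost every continuum, and this set is a continuum because `X` is compact and
normal.
-/

open Filter Topology Function

theorem LUltra.ext {α : Type u} {F : Set (Set α)} {u v : LUltra F} (h : u.sets = v.sets) :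
    u = v := by
  cases u; cases v; cases h; rfl

structure IsWallmanBase {Y : Type u} [t : TopologicalSpace Y] (L : Set (Set Y)) : Prop where
  univ_mem : univ ∈ L
  inter_mem : ∀ a ∈ L, ∀ b ∈ L, a ∩ b ∈ L
  disjunctive : ∀ a ∈ L, ∀ y ∉ a, ∃ b ∈ L, y ∈ b ∧ a ∩ b = ∅
  generateFrom_compl : generateFrom {s | ∃ a ∈ L, s = aᶜ} = t

namespace IsWallmanBase

variable {Y : Type u} [TopologicalSpace Y] {L : Set (Set Y)} (hL : IsWallmanBase L)
include hL

theorem isClosed_of_mem {a : Set Y} (ha : a ∈ L) : IsClosed a := by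
  rw [← isOpen_compl_iff, ← hL.generateFrom_compl]
  exact isOpen_generateFrom_of_mem ⟨a, ha, rfl⟩

def ultra (y : Y) : LUltra L where
  sets := {a | a ∈ L ∧ y ∈ a}
  sets_subset _ ha := ha.1
  univ_mem := ⟨hL.univ_mem, mem_univ y⟩
  empty_notMem h := h.2
  inter_mem a ha b hb := ⟨hL.inter_mem a ha.1 b hb.1, ha.2, hb.2⟩
  superset_mem _ ha _ hb hab := ⟨hb, hab ha.2⟩
  ultra a ha hya :=
    let ⟨b, hb, hyb, hab⟩ := hL.disjunctive a ha y fun h => hya ⟨ha, h⟩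
    ⟨b, ⟨hb, hyb⟩, hab⟩

theorem isInducing_ultra : IsInducing hL.ultra := by
  refine ⟨?_⟩
  change _ = induced _ (generateFrom _)
  rw [induced_generateFrom_eq]
  refine hL.generateFrom_compl.symm.trans (congrArg generateFrom ?_)
  ext s
  constructor
  · rintro ⟨a, ha, rfl⟩
    exact ⟨_, ⟨a, ha, rfl⟩, by ext; simp [ultra, ha]⟩
  · rintro ⟨_, ⟨a, ha, rfl⟩, rfl⟩
    exact ⟨a, ha, by ext; simp [ultra, ha]⟩

theorem ultra_injective [T0Space Y] : Injective hL.ultra :=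
  hL.isInducing_ultra.injective

theorem ultra_surjective [CompactSpace Y] : Surjective hL.ultra := by
  intro u
  have : Nonempty u.sets := ⟨⟨univ, u.univ_mem⟩⟩
  have hclosed : ∀ a ∈ u.sets, IsClosed a := fun a ha => hL.isClosed_of_mem (u.sets_subset ha)
  obtain ⟨y, hy⟩ := IsCompact.nonempty_sInter_of_directed_nonempty_isCompact_isClosed
    (fun a ha b hb => ⟨a ∩ b, u.inter_mem a ha b hb, inter_subset_left, inter_subset_right⟩)
    (fun a ha => nonempty_iff_ne_empty.2 fun h => u.empty_notMem (h ▸ ha))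
    (fun a ha => (hclosed a ha).isCompact) hclosed
  refine ⟨y, LUltra.ext <| Set.ext fun a =>
    ⟨fun ⟨ha, hya⟩ => ?_, fun ha => ⟨u.sets_subset ha, hy a ha⟩⟩⟩
  by_contra hau
  obtain ⟨b, hb, hab⟩ := u.ultra a ha hau
  exact hab.subset ⟨hya, hy b hb⟩

noncomputable def homeomorph [CompactSpace Y] [T0Space Y] : Y ≃ₜ LUltra L :=
  (Equiv.ofBijective _ ⟨hL.ultra_injective, hL.ultra_surjective⟩).toHomeomorphOfIsInducing
    hL.isInducing_ultra

end IsWallmanBase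

namespace LatGen

variable {α : Type u} {B : Set (Set α)}

theorem iInter {ι : Type v} [Finite ι] (huniv : LatGen B univ) {f : ι → Set α}
    (h : ∀ i, LatGen B (f i)) : LatGen B (⋂ i, f i) := by
  cases nonempty_fintype ι
  rw [← iInf_eq_iInter, ← Finset.inf_univ_eq_iInf]
  exact Finset.inf_induction huniv (fun _ ha _ hb => ha.inter hb) fun i _ => h i

theorem exists_disjoint
    (hB : ∀ b ∈ B, ∀ x ∉ b, ∃ c, LatGen B c ∧ x ∈ c ∧ b ∩ c = ∅) {a : Set α}
    (ha : LatGen B a) : ∀ x ∉ a, ∃ c, LatGen B c ∧ x ∈ c ∧ a ∩ c = ∅ := by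
  induction ha with
  | base hb => exact hB _ hb
  | union _ _ ihs iht =>
    intro x hx
    obtain ⟨c, hc, hxc, hsc⟩ := ihs x fun h => hx (Or.inl h)
    obtain ⟨d, hd, hxd, htd⟩ := iht x fun h => hx (Or.inr h)
    refine ⟨c ∩ d, hc.inter hd, ⟨hxc, hxd⟩, ?_⟩
    rw [union_inter_distrib_right, ← inter_assoc, hsc, empty_inter, inter_left_comm, htd,
      inter_empty, union_empty]
  | @inter s t _ _ ihs iht =>
    intro x hx
    by_cases hxs : x ∈ s
    · obtain ⟨c, hc, hxc, htc⟩ := iht x fun h => hx ⟨hxs, h⟩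
      exact ⟨c, hc, hxc, by rw [inter_assoc, htc, inter_empty]⟩
    · obtain ⟨c, hc, hxc, hsc⟩ := ihs x hxs
      exact ⟨c, hc, hxc, by rw [inter_right_comm, hsc, empty_inter]⟩

theorem isClosed [TopologicalSpace α] (hB : ∀ b ∈ B, IsClosed b) {a : Set α}
    (ha : LatGen B a) : IsClosed a := by
  induction ha with
  | base hb => exact hB _ hb
  | union _ _ hs ht => exact hs.union ht
  | inter _ _ hs ht => exact hs.inter ht

end LatGen

namespace Subcontinua

variable {X : Type u} [TopologicalSpace X]

abbrev starBase (X : Type u) [TopologicalSpace X] : Set (Set (Subcontinua X)) :=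
  {S | ∃ F : Finset (Set X), (∀ s ∈ F, IsClosed s) ∧ S = starSet F}

abbrev starLattice (X : Type u) [TopologicalSpace X] : Set (Set (Subcontinua X)) :=
  {S | LatGen (starBase X) S}

theorem nonempty (G : Subcontinua X) : G.1.Nonempty := G.2.2.nonempty

theorem isOpen_setOf_subset {U : Set X} (hU : IsOpen U) :
    IsOpen {A : Subcontinua X | A.1 ⊆ U} :=
  isOpen_generateFrom_of_mem (Or.inl ⟨U, hU, rfl⟩)

theorem isOpen_setOf_inter_nonempty {U : Set X} (hU : IsOpen U) :
    IsOpen {A : Subcontinua X | (A.1 ∩ U).Nonempty} :=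
  isOpen_generateFrom_of_mem (Or.inr ⟨U, hU, rfl⟩)

instance [T1Space X] : T0Space (Subcontinua X) where
  t0 G H h := Subtype.ext <| Set.ext fun x => not_iff_not.1 <| by
    simpa only [mem_ofPred_eq, subset_compl_singleton_iff] using
      h.mem_open_iff (isOpen_setOf_subset (X := X) isOpen_compl_singleton)

theorem mem_starSet_iff {F : Finset (Set X)} {G : Subcontinua X} :
    G ∈ starSet F ↔ (G.1 ∩ ⋂₀ (F : Set (Set X))).Nonempty ∨ ∃ s ∈ F, G.1 ⊆ s := by
  simp only [starSet, mem_ofPred_eq, not_and_or, not_forall, not_not, nonempty_iff_ne_empty,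
    exists_prop]

theorem starSet_empty : starSet (∅ : Finset (Set X)) = univ := by
  ext G
  simp [mem_starSet_iff, G.nonempty]

theorem starSet_singleton (C : Set X) :
    starSet {C} = {A : Subcontinua X | (A.1 ∩ C).Nonempty} := by
  ext G
  simp only [mem_starSet_iff, Finset.coe_singleton, sInter_singleton, Finset.mem_singleton,
    exists_eq_left, mem_ofPred_eq, or_iff_left_iff_imp]
  exact fun hGC => G.nonempty.mono (subset_inter_iff.2 ⟨subset_rfl, hGC⟩)

open scoped Classical in
theorem starSet_pair_empty (D : Set X) :
    starSet {D, ∅} = {A : Subcontinua X | A.1 ⊆ D} := by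
  ext G
  simp [mem_starSet_iff, G.nonempty.ne_empty]

theorem compl_starSet (F : Finset (Set X)) :
    (starSet F)ᶜ = {A : Subcontinua X | A.1 ⊆ (⋂₀ (F : Set (Set X)))ᶜ} ∩
      ⋂ s ∈ F, {A : Subcontinua X | (A.1 ∩ sᶜ).Nonempty} := by
  ext G
  simp [mem_starSet_iff, subset_compl_iff_disjoint_right, not_nonempty_iff_eq_empty,
    disjoint_iff_inter_eq_empty, inter_compl_nonempty_iff]

theorem isClosed_starSet {F : Finset (Set X)} (hF : ∀ s ∈ F, IsClosed s) :
    IsClosed (starSet F) := by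
  rw [← isOpen_compl_iff, compl_starSet]
  exact (isOpen_setOf_subset (isClosed_sInter (by simpa using hF)).isOpen_compl).inter
    (isOpen_biInter_finset fun s hs => isOpen_setOf_inter_nonempty (hF s hs).isOpen_compl)

theorem isClosed_of_mem_starLattice {a : Set (Subcontinua X)} (ha : a ∈ starLattice X) :
    IsClosed a :=
  LatGen.isClosed (by rintro _ ⟨F, hF, rfl⟩; exact isClosed_starSet hF) ha

theorem univ_mem_starLattice : univ ∈ starLattice X :=
  LatGen.base ⟨∅, by simp, starSet_empty.symm⟩

theorem setOf_inter_nonempty_mem_starLattice {C : Set X} (hC : IsClosed C) :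
    {A : Subcontinua X | (A.1 ∩ C).Nonempty} ∈ starLattice X :=
  LatGen.base ⟨{C}, by simpa using hC, (starSet_singleton C).symm⟩

theorem setOf_subset_mem_starLattice {D : Set X} (hD : IsClosed D) :
    {A : Subcontinua X | A.1 ⊆ D} ∈ starLattice X := by
  classical
  exact LatGen.base ⟨{D, ∅}, by simp [hD], (starSet_pair_empty D).symm⟩

theorem generateFrom_compl_starLattice :
    generateFrom {s | ∃ a ∈ starLattice X, s = aᶜ} = instTopologicalSpace X := by
  refine le_antisymm (le_generateFrom ?_) (le_generateFrom ?_)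
  · rintro _ (⟨U, hU, rfl⟩ | ⟨U, hU, rfl⟩)
    · refine isOpen_generateFrom_of_mem
        ⟨_, setOf_inter_nonempty_mem_starLattice hU.isClosed_compl, ?_⟩
      ext A
      simp [inter_compl_nonempty_iff]
    · refine isOpen_generateFrom_of_mem
        ⟨_, setOf_subset_mem_starLattice hU.isClosed_compl, ?_⟩
      ext A
      simp [subset_compl_iff_disjoint_right, disjoint_iff_inter_eq_empty, nonempty_iff_ne_empty]
  · rintro _ ⟨a, ha, rfl⟩
    exact (isClosed_of_mem_starLattice ha).isOpen_compl

theorem exists_mem_starLattice_disjoint_starSet [NormalSpace X] [T1Space X]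
    {F : Finset (Set X)} (hF : ∀ s ∈ F, IsClosed s) {G : Subcontinua X} (hG : G ∉ starSet F) :
    ∃ c ∈ starLattice X, G ∈ c ∧ starSet F ∩ c = ∅ := by
  simp only [mem_starSet_iff, not_or, not_exists, not_and] at hG
  obtain ⟨hGF, hGs⟩ := hG
  obtain ⟨U, -, hGU, hUF⟩ := normal_exists_closure_subset G.2.1
    (isClosed_sInter (by simpa using hF)).isOpen_compl
    (subset_compl_iff_disjoint_right.2 (disjoint_iff_inter_eq_empty.2
      (not_nonempty_iff_eq_empty.1 hGF)))
  have hx : ∀ s : F, ∃ x ∈ G.1, x ∉ (s : Set X) := fun s => not_subset.1 (hGs s s.2)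
  choose x hxG hxs using hx
  have hpt : ∀ y : X, {A : Subcontinua X | y ∈ A.1} ∈ starLattice X := fun y => by
    simpa only [inter_singleton_nonempty] using
      setOf_inter_nonempty_mem_starLattice (X := X) isClosed_singleton
  refine ⟨{A | A.1 ⊆ closure U} ∩ ⋂ s : F, {A | x s ∈ A.1},
    LatGen.inter (setOf_subset_mem_starLattice isClosed_closure)
      (LatGen.iInter univ_mem_starLattice fun s => hpt (x s)),
    ⟨hGU.trans subset_closure, mem_iInter.2 hxG⟩, ?_⟩
  refine eq_empty_of_forall_notMem fun H ⟨hHF, hHU, hHx⟩ => ?_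
  rcases mem_starSet_iff.1 hHF with ⟨y, hyH, hyF⟩ | ⟨s, hs, hHs⟩
  · exact hUF (hHU hyH) hyF
  · exact hxs ⟨s, hs⟩ (hHs (mem_iInter.1 hHx ⟨s, hs⟩))

theorem isWallmanBase_starLattice [NormalSpace X] [T1Space X] :
    IsWallmanBase (starLattice X) where
  univ_mem := univ_mem_starLattice
  inter_mem _ ha _ hb := ha.inter hb
  disjunctive _ ha := ha.exists_disjoint <| by
    rintro _ ⟨F, hF, rfl⟩ G hG
    exact exists_mem_starLattice_disjoint_starSet hF hG
  generateFrom_compl := generateFrom_compl_starLattice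

section Limit

variable (𝒰 : Ultrafilter (Subcontinua X))

def limitSet : Set X :=
  {x | ∀ U ∈ 𝓝 x, {A : Subcontinua X | (A.1 ∩ U).Nonempty} ∈ 𝒰}

theorem isClosed_limitSet : IsClosed (limitSet 𝒰) := by
  refine isOpen_compl_iff.1 (isOpen_iff_mem_nhds.2 fun x hx => ?_)
  obtain ⟨U, hU, hnot⟩ : ∃ U ∈ 𝓝 x, {A : Subcontinua X | (A.1 ∩ U).Nonempty} ∉ 𝒰 := by
    simpa [limitSet] using hx
  filter_upwards [eventually_mem_nhds_iff.2 hU] with y hy hyK using hnot (hyK U hy)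

theorem setOf_subset_mem_of_limitSet_subset [CompactSpace X] {W : Set X} (hW : IsOpen W)
    (hKW : limitSet 𝒰 ⊆ W) : {A : Subcontinua X | A.1 ⊆ W} ∈ 𝒰 := by
  simp_rw [← disjoint_compl_right_iff_subset]
  refine hW.isClosed_compl.isCompact.induction_on
    (p := fun s => {A : Subcontinua X | Disjoint A.1 s} ∈ 𝒰) ?_ ?_ ?_ ?_
  · simp only [disjoint_empty, ofPred_true]
    exact univ_mem
  · exact fun s t hst ht => mem_of_superset ht fun A hA => hA.mono_right hst
  · exact fun s t hs ht => mem_of_superset (inter_mem hs ht) fun A hA => disjoint_union_right.2 hA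
  · intro x hx
    obtain ⟨U, hU, hnot⟩ : ∃ U ∈ 𝓝 x, {A : Subcontinua X | (A.1 ∩ U).Nonempty} ∉ 𝒰 := by
      simpa [limitSet] using fun h => hx (hKW h)
    refine ⟨U, mem_nhdsWithin_of_mem_nhds hU, ?_⟩
    simpa only [compl_ofPred, not_nonempty_iff_eq_empty, ← disjoint_iff_inter_eq_empty] using
      Ultrafilter.compl_mem_iff_notMem.2 hnot

theorem limitSet_nonempty [CompactSpace X] : (limitSet 𝒰).Nonempty := by
  by_contra h
  have := setOf_subset_mem_of_limitSet_subset 𝒰 isOpen_empty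
    (not_nonempty_iff_eq_empty.1 h).le
  simp [subset_empty_iff, fun A : Subcontinua X => A.nonempty.ne_empty] at this

theorem isPreconnected_limitSet [CompactSpace X] [NormalSpace X] :
    IsPreconnected (limitSet 𝒰) := by
  refine (isPreconnected_iff_subset_of_fully_disjoint_closed (isClosed_limitSet 𝒰)).2
    fun P Q hP hQ hPQ hdisj => ?_
  by_contra! h
  obtain ⟨x, hxK, hxP⟩ := not_subset.1 h.1
  obtain ⟨y, hyK, hyQ⟩ := not_subset.1 h.2
  obtain ⟨U, V, hU, hV, hPU, hQV, hUV⟩ := normal_separation hP hQ hdisj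
  have hsub := setOf_subset_mem_of_limitSet_subset 𝒰 (hU.union hV)
    (hPQ.trans (union_subset_union hPU hQV))
  have hxV := hxK V (hV.mem_nhds (hQV ((hPQ hxK).resolve_left hxP)))
  have hyU := hyK U (hU.mem_nhds (hPU ((hPQ hyK).resolve_right hyQ)))
  obtain ⟨A, hAUV, hAV, hAU⟩ := Filter.nonempty_of_mem (inter_mem hsub (inter_mem hxV hyU))
  rcases A.2.2.2.subset_or_subset hU hV hUV hAUV with hA | hA
  · obtain ⟨z, hzA, hzV⟩ := hAV
    exact hUV.notMem_of_mem_left (hA hzA) hzV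
  · obtain ⟨z, hzA, hzU⟩ := hAU
    exact hUV.notMem_of_mem_left hzU (hA hzA)

def limit [CompactSpace X] [NormalSpace X] : Subcontinua X :=
  ⟨limitSet 𝒰, isClosed_limitSet 𝒰, limitSet_nonempty 𝒰, isPreconnected_limitSet 𝒰⟩

theorem le_nhds_limit [CompactSpace X] [NormalSpace X] :
    (𝒰 : Filter (Subcontinua X)) ≤ 𝓝 (limit 𝒰) := by
  rw [nhds_generateFrom]
  refine le_iInf₂ ?_
  rintro _ ⟨hK, ⟨W, hW, rfl⟩ | ⟨W, hW, rfl⟩⟩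
  · exact le_principal_iff.2 (setOf_subset_mem_of_limitSet_subset 𝒰 hW hK)
  · obtain ⟨x, hxK, hxW⟩ := hK
    exact le_principal_iff.2 (hxK W (hW.mem_nhds hxW))

end Limit

instance [CompactSpace X] [NormalSpace X] : CompactSpace (Subcontinua X) :=
  isCompact_univ_iff.1 (isCompact_iff_ultrafilter_le_nhds.2 fun 𝒰 _ =>
    ⟨limit 𝒰, mem_univ _, le_nhds_limit 𝒰⟩)

end Subcontinua

/-- For a compact Hausdorff space `X`, the hyperspace `C(X)` with the
Vietoris topology is homeomorphic to the Wallman space of the lattice `K*` generated under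
finite unions and intersections by the sets `F*`, for finite families `F` of closed subsets
of `X`. -/
theorem hyperspace_homeomorph_wallman (X : Type u) [TopologicalSpace X] [CompactSpace X]
    [T2Space X] :
    Nonempty (Subcontinua X ≃ₜ
      LUltra {S | LatGen {S | ∃ F : Finset (Set X), (∀ s ∈ F, IsClosed s) ∧ S = starSet F}
        S}) :=
  ⟨Subcontinua.isWallmanBase_starLattice.homeomorph⟩
end
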